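/- arXiv:1604.02491 — 13 statements merged into one kernel-verified Lean document; each statement's English description precedes it below -/
import Mathlib

section
/- Define a : ℤ × ℤ → ℤ by a_{ij} = F_{2r−1} if i + j = r ≥ 1 and a_{ij} = F_{−2r+1} if i + j = r ≤ 0, where F denotes Fibonacci numbers with F₁ = F₂ = 1. Then a is an anti-SL₂-tiling of ℤ²: all values are positive and a_{i,j+1}·a_{i+1,j} − a_{ij}·a_{i+1,j+1} = −1 for all i,j. -/
/-- The staircase array: value depends on `r = i + j`, equal to `F_{2r-1}` for `r ≥ 1`
and to `F_{-2r+1}` for `r ≤ 0`, with Fibonacci indexed `F₁ = F₂ = 1`. -/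
def staircase (p : ℤ × ℤ) : ℤ :=
  if 1 ≤ p.1 + p.2 then (Nat.fib (2 * (p.1 + p.2) - 1).toNat : ℤ)
  else (Nat.fib (1 - 2 * (p.1 + p.2)).toNat : ℤ)

lemma fib_step (n : ℕ) : Nat.fib (2 * n + 5) + Nat.fib (2 * n + 1) = 3 * Nat.fib (2 * n + 3) := by
  have h1 := Nat.fib_add_two (n := 2 * n + 3)
  have h2 := Nat.fib_add_two (n := 2 * n + 2)
  have h3 := Nat.fib_add_two (n := 2 * n + 1)
  simp only [show 2*n+3+2 = 2*n+5 from rfl, show 2*n+2+2 = 2*n+4 from rfl,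
    show 2*n+1+2 = 2*n+3 from rfl, show 2*n+3+1 = 2*n+4 from rfl,
    show 2*n+2+1 = 2*n+3 from rfl, show 2*n+1+1 = 2*n+2 from rfl] at h1 h2 h3
  omega

lemma key (k : ℕ) :
    ((Nat.fib (2 * k + 3) : ℤ)) ^ 2 - 3 * Nat.fib (2 * k + 1) * Nat.fib (2 * k + 3)
      + (Nat.fib (2 * k + 1) : ℤ) ^ 2 = -1 := by
  induction k with
  | zero => norm_num [Nat.fib]
  | succ n ih =>
      have h := fib_step n
      have h' : (Nat.fib (2 * (n + 1) + 3) : ℤ)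
          = 3 * Nat.fib (2 * n + 3) - Nat.fib (2 * n + 1) := by
        have : 2 * (n + 1) + 3 = 2 * n + 5 := by ring
        rw [this]
        zify at h
        linarith
      have h2 : (2 * (n + 1) + 1) = 2 * n + 3 := by ring
      rw [h', h2]
      nlinarith [ih]

lemma key2 (k : ℕ) :
    ((Nat.fib (2 * k + 3) : ℤ)) ^ 2 - Nat.fib (2 * k + 1) * Nat.fib (2 * k + 5) = -1 := by
  have h := fib_step k
  have h' : (Nat.fib (2 * k + 5) : ℤ) = 3 * Nat.fib (2 * k + 3) - Nat.fib (2 * k + 1) := by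
    zify at h; linarith
  rw [h']
  nlinarith [key k]

theorem staircase_is_anti_sl2_tiling :
    (∀ i j : ℤ, 0 < staircase (i, j)) ∧
    (∀ i j : ℤ, staircase (i, j + 1) * staircase (i + 1, j)
      - staircase (i, j) * staircase (i + 1, j + 1) = -1) := by
  constructor
  · intro i j
    unfold staircase
    dsimp only
    split
    · have : 0 < (2 * (i + j) - 1).toNat := by omega
      exact_mod_cast Nat.fib_pos.mpr this
    · have : 0 < (1 - 2 * (i + j)).toNat := by omega
      exact_mod_cast Nat.fib_pos.mpr this
  · intro i j
    unfold staircase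
    dsimp only
    rcases le_or_gt 1 (i + j) with h | h
    · -- r ≥ 1
      obtain ⟨k, hk⟩ := Int.le.dest h
      rw [if_pos (by omega : (1:ℤ) ≤ i + (j + 1)), if_pos (by omega : (1:ℤ) ≤ i + 1 + j),
        if_pos (by omega : (1:ℤ) ≤ i + j), if_pos (by omega : (1:ℤ) ≤ i + 1 + (j + 1))]
      have e1 : (2 * (i + (j + 1)) - 1).toNat = 2 * k + 3 := by omega
      have e2 : (2 * (i + 1 + j) - 1).toNat = 2 * k + 3 := by omega
      have e3 : (2 * (i + j) - 1).toNat = 2 * k + 1 := by omega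
      have e4 : (2 * (i + 1 + (j + 1)) - 1).toNat = 2 * k + 5 := by omega
      rw [e1, e2, e3, e4]
      have := key2 k
      nlinarith [this]
    · rcases le_or_gt (i + j) (-2) with h2 | h2
      · -- r ≤ -2
        obtain ⟨k, hk⟩ := Int.le.dest (by omega : (0:ℤ) ≤ -(i + j) - 2)
        rw [if_neg (by omega : ¬ (1:ℤ) ≤ i + (j + 1)),
          if_neg (by omega : ¬ (1:ℤ) ≤ i + 1 + j),
          if_neg (by omega : ¬ (1:ℤ) ≤ i + j),
          if_neg (by omega : ¬ (1:ℤ) ≤ i + 1 + (j + 1))]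
        have e1 : (1 - 2 * (i + (j + 1))).toNat = 2 * k + 3 := by omega
        have e2 : (1 - 2 * (i + 1 + j)).toNat = 2 * k + 3 := by omega
        have e3 : (1 - 2 * (i + j)).toNat = 2 * k + 5 := by omega
        have e4 : (1 - 2 * (i + 1 + (j + 1))).toNat = 2 * k + 1 := by omega
        rw [e1, e2, e3, e4]
        nlinarith [key2 k]
      · -- r = 0 or r = -1
        rcases (by omega : i + j = 0 ∨ i + j = -1) with h0 | h0
        · rw [if_pos (by omega : (1:ℤ) ≤ i + (j + 1)),
            if_pos (by omega : (1:ℤ) ≤ i + 1 + j),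
            if_neg (by omega : ¬ (1:ℤ) ≤ i + j),
            if_pos (by omega : (1:ℤ) ≤ i + 1 + (j + 1))]
          have e1 : (2 * (i + (j + 1)) - 1).toNat = 1 := by omega
          have e2 : (2 * (i + 1 + j) - 1).toNat = 1 := by omega
          have e3 : (1 - 2 * (i + j)).toNat = 1 := by omega
          have e4 : (2 * (i + 1 + (j + 1)) - 1).toNat = 3 := by omega
          rw [e1, e2, e3, e4]
          norm_num [Nat.fib]
        · rw [if_neg (by omega : ¬ (1:ℤ) ≤ i + (j + 1)),
            if_neg (by omega : ¬ (1:ℤ) ≤ i + 1 + j),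
            if_neg (by omega : ¬ (1:ℤ) ≤ i + j),
            if_pos (by omega : (1:ℤ) ≤ i + 1 + (j + 1))]
          have e1 : (1 - 2 * (i + (j + 1))).toNat = 1 := by omega
          have e2 : (1 - 2 * (i + 1 + j)).toNat = 1 := by omega
          have e3 : (1 - 2 * (i + j)).toNat = 3 := by omega
          have e4 : (2 * (i + 1 + (j + 1)) - 1).toNat = 1 := by omega
          rw [e1, e2, e3, e4]
          norm_num [Nat.fib]
end

section
/- Let ε be an n×n signature matrix (symmetric, off-diagonal entries ±1, diagonal entries −1), and fix r ∈ {1,…,n}. Let ε^{(r)} be obtained from ε by negating all entries in row r and column r except the diagonal. If (a_𝐢)_{𝐢∈ℤⁿ} is an ε-SL₂-tiling of ℤⁿ, then b_𝐢 := a_{𝐢 − 2·i_r·e_r} defines an ε^{(r)}-SL₂-tiling of ℤⁿ. -/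
lemma flip_aux_ne (n : ℕ) (i : Fin n → ℤ) (r ℓ : Fin n) (hl : ℓ ≠ r) :
    i + Pi.single ℓ 1 - (2 * (i + Pi.single ℓ 1 : Fin n → ℤ) r) • Pi.single r 1
      = i - (2 * i r) • Pi.single r 1 + Pi.single ℓ 1 := by
  have h : (i + Pi.single ℓ 1 : Fin n → ℤ) r = i r := by
    simp [Pi.single_eq_of_ne (Ne.symm hl)]
  rw [h]; abel

lemma flip_aux_eq (n : ℕ) (i : Fin n → ℤ) (r : Fin n) :
    i + Pi.single r 1 - (2 * (i + Pi.single r 1 : Fin n → ℤ) r) • Pi.single r 1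
      = i - (2 * i r) • Pi.single r 1 - Pi.single r 1 := by
  have h : (i + Pi.single r 1 : Fin n → ℤ) r = i r + 1 := by simp
  rw [h]; module

lemma flip_aux_re (n : ℕ) (i : Fin n → ℤ) (r ℓ : Fin n) (hl : ℓ ≠ r) :
    i + Pi.single r 1 + Pi.single ℓ 1
        - (2 * (i + Pi.single r 1 + Pi.single ℓ 1 : Fin n → ℤ) r) • Pi.single r 1
      = i - (2 * i r) • Pi.single r 1 - Pi.single r 1 + Pi.single ℓ 1 := by
  have h : (i + Pi.single r 1 + Pi.single ℓ 1 : Fin n → ℤ) r = i r + 1 := by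
    simp [Pi.single_eq_of_ne (Ne.symm hl)]
  rw [h]; module

lemma flip_aux_er (n : ℕ) (i : Fin n → ℤ) (r k : Fin n) (hk : k ≠ r) :
    i + Pi.single k 1 + Pi.single r 1
        - (2 * (i + Pi.single k 1 + Pi.single r 1 : Fin n → ℤ) r) • Pi.single r 1
      = i - (2 * i r) • Pi.single r 1 - Pi.single r 1 + Pi.single k 1 := by
  have h : (i + Pi.single k 1 + Pi.single r 1 : Fin n → ℤ) r = i r + 1 := by
    simp [Pi.single_eq_of_ne (Ne.symm hk)]
  rw [h]; module

lemma flip_aux_nene (n : ℕ) (i : Fin n → ℤ) (r k ℓ : Fin n) (hk : k ≠ r) (hl : ℓ ≠ r) :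
    i + Pi.single k 1 + Pi.single ℓ 1
        - (2 * (i + Pi.single k 1 + Pi.single ℓ 1 : Fin n → ℤ) r) • Pi.single r 1
      = i - (2 * i r) • Pi.single r 1 + Pi.single k 1 + Pi.single ℓ 1 := by
  have h : (i + Pi.single k 1 + Pi.single ℓ 1 : Fin n → ℤ) r = i r := by
    simp [Pi.single_eq_of_ne (Ne.symm hk), Pi.single_eq_of_ne (Ne.symm hl)]
  rw [h]; abel

theorem flip_of_tiling (n : ℕ) (ε : Fin n → Fin n → ℤ)
    (hsym : ∀ k ℓ, ε k ℓ = ε ℓ k)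
    (hoff : ∀ k ℓ, k ≠ ℓ → ε k ℓ = 1 ∨ ε k ℓ = -1)
    (hdiag : ∀ k, ε k k = -1)
    (r : Fin n)
    (ε' : Fin n → Fin n → ℤ)
    (hε' : ∀ k ℓ, ε' k ℓ = if (k = r ∧ ℓ ≠ r) ∨ (k ≠ r ∧ ℓ = r) then -ε k ℓ else ε k ℓ)
    (a : (Fin n → ℤ) → ℤ)
    (hpos : ∀ i, 0 < a i)
    (hrel : ∀ (i : Fin n → ℤ) (k ℓ : Fin n), k ≠ ℓ →
      a (i + Pi.single ℓ 1) * a (i + Pi.single k 1)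
        - a i * a (i + Pi.single k 1 + Pi.single ℓ 1) = ε k ℓ)
    (b : (Fin n → ℤ) → ℤ)
    (hb : ∀ i, b i = a (i - (2 * i r) • Pi.single r 1)) :
    (∀ i, 0 < b i) ∧
    (∀ (i : Fin n → ℤ) (k ℓ : Fin n), k ≠ ℓ →
      b (i + Pi.single ℓ 1) * b (i + Pi.single k 1)
        - b i * b (i + Pi.single k 1 + Pi.single ℓ 1) = ε' k ℓ) := by
  constructor
  · intro i; rw [hb]; exact hpos _
  · intro i k ℓ hkℓ
    rw [hb, hb, hb, hb, hε']
    by_cases hk : k = r <;> by_cases hl : ℓ = r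
    · exact absurd (hk.trans hl.symm) hkℓ
    · rw [if_pos (Or.inl ⟨hk, hl⟩), hk]
      rw [flip_aux_ne n i r ℓ hl, flip_aux_eq n i r, flip_aux_re n i r ℓ hl]
      have hne : r ≠ ℓ := by rw [← hk]; exact hkℓ
      have H := hrel (i - (2 * i r) • Pi.single r 1 - Pi.single r 1) r ℓ hne
      have e5 : i - (2 * i r) • Pi.single r 1 - Pi.single r 1 + Pi.single r 1
          = i - (2 * i r) • Pi.single r 1 := by abel
      rw [e5] at H
      linear_combination -H
    · rw [if_pos (Or.inr ⟨hk, hl⟩), hl]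
      rw [flip_aux_eq n i r, flip_aux_ne n i r k hk, flip_aux_er n i r k hk]
      have hne : k ≠ r := by rw [← hl]; exact hkℓ
      have H := hrel (i - (2 * i r) • Pi.single r 1 - Pi.single r 1) k r hne
      have e5 : i - (2 * i r) • Pi.single r 1 - Pi.single r 1 + Pi.single r 1
          = i - (2 * i r) • Pi.single r 1 := by abel
      have e6 : i - (2 * i r) • Pi.single r 1 - Pi.single r 1 + Pi.single k 1 + Pi.single r 1
          = i - (2 * i r) • Pi.single r 1 + Pi.single k 1 := by abel
      rw [e5, e6] at H
      linear_combination -H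
    · rw [if_neg (by tauto)]
      rw [flip_aux_ne n i r ℓ hl, flip_aux_ne n i r k hk, flip_aux_nene n i r k ℓ hk hl]
      exact hrel _ k ℓ hkℓ
end

section
/- Let n ≥ 3, let ε ∈ {1, −1} be fixed, and let (a_𝐢)_{𝐢∈ℤⁿ} be positive integers satisfying a_{𝐢+e_ℓ}·a_{𝐢+e_k} − a_𝐢·a_{𝐢+e_k+e_ℓ} = ε for all 𝐢 and all k ≠ ℓ. Then a_𝐢 depends only on the sum i₁ + ⋯ + i_n; that is, if i₁+⋯+i_n = j₁+⋯+j_n then a_𝐢 = a_𝐣. -/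
theorem constant_slices (n : ℕ) (hn : 3 ≤ n) (ε : ℤ) (hε : ε = 1 ∨ ε = -1)
    (a : (Fin n → ℤ) → ℤ)
    (hpos : ∀ i, 0 < a i)
    (hrel : ∀ (i : Fin n → ℤ) (k ℓ : Fin n), k ≠ ℓ →
      a (i + Pi.single ℓ 1) * a (i + Pi.single k 1)
        - a i * a (i + Pi.single k 1 + Pi.single ℓ 1) = ε) :
    ∀ i j : Fin n → ℤ, (∑ s, i s) = (∑ s, j s) → a i = a j := by
  have hnz : NeZero n := ⟨by omega⟩
  -- Step lemma: neighbors in different directions agree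
  have step : ∀ (i : Fin n → ℤ) (k ℓ : Fin n), k ≠ ℓ →
      a (i + Pi.single k 1) = a (i + Pi.single ℓ 1) := by
    intro i k ℓ hkl
    obtain ⟨m, hmk, hml⟩ : ∃ m : Fin n, m ≠ k ∧ m ≠ ℓ := by
      have hne : ((({k, ℓ} : Finset (Fin n)))ᶜ).Nonempty := by
        rw [← Finset.card_pos, Finset.card_compl]
        have h2 : ({k, ℓ} : Finset (Fin n)).card ≤ 2 :=
          (Finset.card_insert_le _ _).trans (by simp)
        have := Fintype.card_fin n
        omega
      obtain ⟨m, hm⟩ := hne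
      simp only [Finset.mem_compl, Finset.mem_insert, Finset.mem_singleton, not_or] at hm
      exact ⟨m, hm.1, hm.2⟩
    have h2 := hrel i k m hmk.symm
    have h3 := hrel i ℓ m hml.symm
    have h4 := hrel (i + Pi.single k 1) ℓ m hml.symm
    have h5 := hrel (i + Pi.single ℓ 1) k m hmk.symm
    rw [show i + Pi.single ℓ 1 + Pi.single k 1 = i + Pi.single k 1 + Pi.single ℓ 1 from by ring] at h5
    set A := a i
    set u := a (i + Pi.single k 1)
    set v := a (i + Pi.single ℓ 1)
    set Z := a (i + Pi.single k 1 + Pi.single ℓ 1)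
    set T := a (i + Pi.single k 1 + Pi.single ℓ 1 + Pi.single m 1)
    have E4 : (u - v) * (Z * a (i + Pi.single m 1) - A * T) = 0 := by
      linear_combination Z * h2 - Z * h3 + A * h4 - A * h5
    have E3 : u * (Z * a (i + Pi.single m 1) - A * T) = ε * (A + Z) := by
      linear_combination Z * h2 + A * h4
    have hAp := hpos i
    have hZp := hpos (i + Pi.single k 1 + Pi.single ℓ 1)
    have hne : Z * a (i + Pi.single m 1) - A * T ≠ 0 := by
      intro h0
      rw [h0, mul_zero] at E3
      rcases hε with rfl | rfl <;> nlinarith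
    have := mul_eq_zero.mp E4
    rcases this with h | h
    · exact sub_eq_zero.mp h
    · exact absurd h hne
  -- Move lemma
  have move : ∀ (i : Fin n → ℤ) (k ℓ : Fin n), k ≠ ℓ →
      a (i + Pi.single k 1 - Pi.single ℓ 1) = a i := by
    intro i k ℓ h
    have hs := step (i - Pi.single ℓ 1) k ℓ h
    rw [show i - Pi.single ℓ 1 + Pi.single ℓ 1 = i from by ring,
        show i - Pi.single ℓ 1 + Pi.single k 1 = i + Pi.single k 1 - Pi.single ℓ 1 from by ring]
      at hs
    exact hs
  -- Key: every point has the same value as the canonical point on its slice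
  have key : ∀ N : ℕ, ∀ i : Fin n → ℤ,
      (∑ s ∈ Finset.univ.erase (0 : Fin n), (i s).natAbs) ≤ N →
      a i = a (Pi.single (0 : Fin n) (∑ s, i s)) := by
    intro N
    induction N with
    | zero =>
      intro i h
      have hzero : ∀ s : Fin n, s ≠ 0 → i s = 0 := by
        intro s hs
        have hmem : s ∈ Finset.univ.erase (0 : Fin n) := by simp [hs]
        have := Finset.sum_le_sum_of_subset (Finset.singleton_subset_iff.mpr hmem)
          (f := fun s => (i s).natAbs)
        simp at this
        omega
      have hi : i = Pi.single (0 : Fin n) (i 0) := by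
        funext s
        by_cases hs : s = 0
        · subst hs; simp
        · rw [hzero s hs, Pi.single_eq_of_ne hs]
      have hsum : (∑ s, i s) = i 0 := by
        rw [hi]; simp [Finset.sum_pi_single]
      rw [hsum, ← hi]
    | succ N ih =>
      intro i h
      by_cases h0 : (∑ s ∈ Finset.univ.erase (0 : Fin n), (i s).natAbs) = 0
      · exact ih i (by omega)
      · obtain ⟨s, hsmem, hsne⟩ : ∃ s ∈ Finset.univ.erase (0 : Fin n), (i s).natAbs ≠ 0 := by
          by_contra hc
          push_neg at hc
          exact h0 (Finset.sum_eq_zero hc)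
        have hs0 : s ≠ 0 := Finset.ne_of_mem_erase hsmem
        have hsz : i s ≠ 0 := fun hz => hsne (by rw [hz]; rfl)
        rcases lt_or_gt_of_ne hsz with hneg | hposv
        · -- i s < 0 : add e_s, subtract e_0
          set i' := i + Pi.single s 1 - Pi.single (0 : Fin n) 1 with hi'
          have ha : a i' = a i := move i s 0 hs0
          have hcoord : ∀ t : Fin n, t ≠ 0 → i' t = i t + (Pi.single s 1 : Fin n → ℤ) t := by
            intro t ht
            simp [hi', Pi.single_eq_of_ne ht]
          have hmeas : (∑ t ∈ Finset.univ.erase (0 : Fin n), (i' t).natAbs) ≤ N := by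
            have hsplit : ∀ (f : Fin n → ℤ),
                (∑ t ∈ Finset.univ.erase (0 : Fin n), (f t).natAbs)
                = (f s).natAbs + ∑ t ∈ (Finset.univ.erase (0 : Fin n)).erase s, (f t).natAbs :=
              fun f => (Finset.add_sum_erase _ _ hsmem).symm
            rw [hsplit i'] at *
            rw [hsplit i] at h
            have heq : ∀ t ∈ (Finset.univ.erase (0 : Fin n)).erase s, (i' t).natAbs = (i t).natAbs := by
              intro t ht
              have ht' : t ≠ s := Finset.ne_of_mem_erase ht
              have ht0 : t ≠ 0 := Finset.ne_of_mem_erase (Finset.mem_of_mem_erase ht)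
              rw [hcoord t ht0, Pi.single_eq_of_ne ht', add_zero]
            rw [Finset.sum_congr rfl heq]
            have : i' s = i s + 1 := by rw [hcoord s hs0, Pi.single_eq_same]
            rw [this]
            omega
          have hsumeq : (∑ t, i' t) = ∑ t, i t := by
            simp [hi', Finset.sum_add_distrib, Finset.sum_sub_distrib, Finset.sum_pi_single]
          rw [← ha, ih i' hmeas, hsumeq]
        · -- i s > 0 : add e_0, subtract e_s
          set i' := i + Pi.single (0 : Fin n) 1 - Pi.single s 1 with hi'
          have ha : a i' = a i := move i 0 s (Ne.symm hs0)
          have hcoord : ∀ t : Fin n, t ≠ 0 → i' t = i t - (Pi.single s 1 : Fin n → ℤ) t := by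
            intro t ht
            simp [hi', Pi.single_eq_of_ne ht]
          have hmeas : (∑ t ∈ Finset.univ.erase (0 : Fin n), (i' t).natAbs) ≤ N := by
            have hsplit : ∀ (f : Fin n → ℤ),
                (∑ t ∈ Finset.univ.erase (0 : Fin n), (f t).natAbs)
                = (f s).natAbs + ∑ t ∈ (Finset.univ.erase (0 : Fin n)).erase s, (f t).natAbs :=
              fun f => (Finset.add_sum_erase _ _ hsmem).symm
            rw [hsplit i']
            rw [hsplit i] at h
            have heq : ∀ t ∈ (Finset.univ.erase (0 : Fin n)).erase s, (i' t).natAbs = (i t).natAbs := by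
              intro t ht
              have ht' : t ≠ s := Finset.ne_of_mem_erase ht
              have ht0 : t ≠ 0 := Finset.ne_of_mem_erase (Finset.mem_of_mem_erase ht)
              rw [hcoord t ht0, Pi.single_eq_of_ne ht', sub_zero]
            rw [Finset.sum_congr rfl heq]
            have : i' s = i s - 1 := by rw [hcoord s hs0, Pi.single_eq_same]
            rw [this]
            omega
          have hsumeq : (∑ t, i' t) = ∑ t, i t := by
            simp [hi', Finset.sum_add_distrib, Finset.sum_sub_distrib, Finset.sum_pi_single]
          rw [← ha, ih i' hmeas, hsumeq]
  intro i j hsum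
  rw [key _ i le_rfl, key _ j le_rfl, hsum]
end

section
/- Let a, x, y, z be positive integers and ε ∈ {1, −1}, and suppose a divides xy − ε, xz − ε, and yz − ε, and that the three expressions ((xy−ε)/a·(xz−ε)/a − ε)/x, ((xy−ε)/a·(yz−ε)/a − ε)/y, ((xz−ε)/a·(yz−ε)/a − ε)/z are all equal (as rationals). Then x = y = z. -/
theorem cube_corner_computation (a x y z ε : ℤ)
    (ha : 0 < a) (hx : 0 < x) (hy : 0 < y) (hz : 0 < z)
    (hε : ε = 1 ∨ ε = -1)
    (hxy : a ∣ x * y - ε) (hxz : a ∣ x * z - ε) (hyz : a ∣ y * z - ε)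
    (h1 : (((x * y - ε : ℚ) / a * ((x * z - ε : ℚ) / a) - ε) / x)
        = (((x * y - ε : ℚ) / a * ((y * z - ε : ℚ) / a) - ε) / y))
    (h2 : (((x * y - ε : ℚ) / a * ((y * z - ε : ℚ) / a) - ε) / y)
        = (((x * z - ε : ℚ) / a * ((y * z - ε : ℚ) / a) - ε) / z)) :
    x = y ∧ y = z := by
  have ha' : (a : ℚ) ≠ 0 := by exact_mod_cast ha.ne'
  have hx' : (x : ℚ) ≠ 0 := by exact_mod_cast hx.ne'
  have hy' : (y : ℚ) ≠ 0 := by exact_mod_cast hy.ne'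
  have hz' : (z : ℚ) ≠ 0 := by exact_mod_cast hz.ne'
  have hε' : (ε : ℚ) ≤ 1 := by rcases hε with h | h <;> simp [h]
  have hεs : (ε : ℚ) * ε = 1 := by rcases hε with h | h <;> simp [h]
  have hfac : ((x : ℚ) * y - ε + a ^ 2) > 0 := by
    have : (1 : ℚ) ≤ (x : ℚ) * y := by
      have : (1 : ℤ) ≤ x * y := by nlinarith
      exact_mod_cast this
    have ha2 : (1 : ℚ) ≤ (a : ℚ) ^ 2 := by
      have : (1 : ℤ) ≤ a ^ 2 := by nlinarith
      exact_mod_cast this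
    linarith
  have hfac2 : ((y : ℚ) * z - ε + a ^ 2) > 0 := by
    have : (1 : ℚ) ≤ (y : ℚ) * z := by
      have : (1 : ℤ) ≤ y * z := by nlinarith
      exact_mod_cast this
    have ha2 : (1 : ℚ) ≤ (a : ℚ) ^ 2 := by
      have : (1 : ℤ) ≤ a ^ 2 := by nlinarith
      exact_mod_cast this
    linarith
  field_simp at h1 h2
  have e1' : ((x : ℚ) * y - ε + a ^ 2) * ((x : ℚ) - y) * ε * (a ^ 2) = 0 := by
    linear_combination ((a : ℚ) ^ 2) * h1
  have e2' : ((y : ℚ) * z - ε + a ^ 2) * ((y : ℚ) - z) * ε * (a ^ 2) = 0 := by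
    linear_combination ((a : ℚ) ^ 2) * h2
  have ha2 : ((a : ℚ) ^ 2) ≠ 0 := pow_ne_zero 2 ha'
  have e1 : ((x : ℚ) * y - ε + a ^ 2) * ((x : ℚ) - y) * ε = 0 :=
    (mul_eq_zero.1 e1').resolve_right ha2
  have e2 : ((y : ℚ) * z - ε + a ^ 2) * ((y : ℚ) - z) * ε = 0 :=
    (mul_eq_zero.1 e2').resolve_right ha2
  have hεne : (ε : ℚ) ≠ 0 := by rcases hε with h | h <;> simp [h]
  have hxy' : (x : ℚ) = y := by
    rcases mul_eq_zero.1 e1 with h | h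
    · rcases mul_eq_zero.1 h with h | h
      · linarith
      · linarith
    · exact absurd h hεne
  have hyz' : (y : ℚ) = z := by
    rcases mul_eq_zero.1 e2 with h | h
    · rcases mul_eq_zero.1 h with h | h
      · linarith
      · linarith
    · exact absurd h hεne
  exact ⟨by exact_mod_cast hxy', by exact_mod_cast hyz'⟩
end

section
/- Let n ≥ 3 and let (a_𝐢)_{𝐢∈ℤⁿ} be an anti-SL₂-tiling of ℤⁿ, i.e. positive integers with a_{𝐢+e_ℓ}·a_{𝐢+e_k} − a_𝐢·a_{𝐢+e_k+e_ℓ} = −1 for all 𝐢 and k ≠ ℓ. Then the value 1 is attained: there exists 𝐢 with a_𝐢 = 1. -/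
private lemma key_anti {n : ℕ} (a : (Fin n → ℤ) → ℤ) (hpos : ∀ i, 0 < a i)
    (hrel : ∀ (i : Fin n → ℤ) (k ℓ : Fin n), k ≠ ℓ →
      a (i + Pi.single ℓ 1) * a (i + Pi.single k 1)
        - a i * a (i + Pi.single k 1 + Pi.single ℓ 1) = -1)
    (u v w : Fin n) (huv : u ≠ v) (huw : u ≠ w) (hvw : v ≠ w)
    (x : Fin n → ℤ)
    (hle : a (x + Pi.single w 1) ≤ a (x + Pi.single u 1) + a (x + Pi.single v 1)) :
    a (x + Pi.single u 1) = a (x + Pi.single v 1) := by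
  by_contra hne
  have r1 := hrel x u v huv
  have r2 := hrel x u w huw
  have r3 := hrel x v w hvw
  have r4 := hrel (x + Pi.single u 1) v w hvw
  have r5 := hrel (x + Pi.single v 1) u w huw
  have r6 := hrel (x + Pi.single w 1) u v huv
  have e1 : x + Pi.single v 1 + Pi.single u 1 = x + Pi.single u 1 + Pi.single v 1 := by abel
  have e3 : x + Pi.single w 1 + Pi.single v 1 = x + Pi.single v 1 + Pi.single w 1 := by abel
  have e4 : x + Pi.single w 1 + Pi.single u 1 = x + Pi.single u 1 + Pi.single w 1 := by abel
  have e5 : x + Pi.single u 1 + Pi.single w 1 + Pi.single v 1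
      = x + Pi.single u 1 + Pi.single v 1 + Pi.single w 1 := by abel
  rw [e1] at r5
  rw [e3, e4, e5] at r6
  set b := a x with hb
  set Pu := a (x + Pi.single u 1) with hPu
  set Pv := a (x + Pi.single v 1) with hPv
  set Pw := a (x + Pi.single w 1) with hPw
  set Auv := a (x + Pi.single u 1 + Pi.single v 1) with hAuv
  set Auw := a (x + Pi.single u 1 + Pi.single w 1) with hAuw
  set Avw := a (x + Pi.single v 1 + Pi.single w 1) with hAvw
  set D := a (x + Pi.single u 1 + Pi.single v 1 + Pi.single w 1) with hD0
  have h0 : (Pu - Pv) * (b * D - Auv * Pw) = 0 := by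
    linear_combination (-b) * r4 + b * r5 - Auv * r2 + Auv * r3
  have hBD : b * D = Auv * Pw := by
    rcases mul_eq_zero.mp h0 with h | h
    · exact absurd (by linarith) hne
    · linarith
  have hD : b * b * D = (Pu * Pv + 1) * Pw := by
    linear_combination b * hBD - Pw * r1
  have heq : (Pu * Pw + 1) * (Pv * Pw + 1) + b * b = Pw * Pw * (Pu * Pv + 1) := by
    linear_combination (b * Avw) * r2 + (Pw * Pu + 1) * r3 + (b * b) * r6 + Pw * hD
  nlinarith [mul_nonneg (hpos (x + Pi.single w 1)).le (sub_nonneg.2 hle), hpos x,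
    hpos (x + Pi.single u 1), hpos (x + Pi.single v 1), hpos (x + Pi.single w 1)]

theorem anti_sl2_attains_one (n : ℕ) (hn : 3 ≤ n)
    (a : (Fin n → ℤ) → ℤ)
    (hpos : ∀ i, 0 < a i)
    (hrel : ∀ (i : Fin n → ℤ) (k ℓ : Fin n), k ≠ ℓ →
      a (i + Pi.single ℓ 1) * a (i + Pi.single k 1)
        - a i * a (i + Pi.single k 1 + Pi.single ℓ 1) = -1) :
    ∃ i, a i = 1 := by
  classical
  have hSne : {k : ℕ | ∃ j, a j = (k : ℤ)}.Nonempty :=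
    ⟨(a 0).toNat, 0, (Int.toNat_of_nonneg (hpos 0).le).symm⟩
  set M := sInf {k : ℕ | ∃ j, a j = (k : ℤ)} with hM
  obtain ⟨i₀, hi₀⟩ : ∃ j, a j = (M : ℤ) := Nat.sInf_mem hSne
  have hmin : ∀ j, (M : ℤ) ≤ a j := by
    intro j
    have hj : (a j).toNat ∈ {k : ℕ | ∃ j, a j = (k : ℤ)} :=
      ⟨j, (Int.toNat_of_nonneg (hpos j).le).symm⟩
    have := Nat.sInf_le hj
    calc (M : ℤ) ≤ ((a j).toNat : ℤ) := by exact_mod_cast this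
      _ = a j := Int.toNat_of_nonneg (hpos j).le
  have hM1 : 1 ≤ (M : ℤ) := hi₀ ▸ hpos i₀
  -- directions
  set u : Fin n := ⟨0, by omega⟩ with hu
  set v : Fin n := ⟨1, by omega⟩ with hv
  set w : Fin n := ⟨2, by omega⟩ with hw
  have huv : u ≠ v := by simp [hu, hv, Fin.ext_iff]
  have huw : u ≠ w := by simp [hu, hw, Fin.ext_iff]
  have hvw : v ≠ w := by simp [hv, hw, Fin.ext_iff]
  set x := i₀ - Pi.single w 1 with hx
  have hxw : x + Pi.single w 1 = i₀ := by simp [hx]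
  -- step 2 : the u- and v-neighbours of x agree
  have h2 : a (x + Pi.single u 1) = a (x + Pi.single v 1) := by
    apply key_anti a hpos hrel u v w huv huw hvw x
    rw [hxw, hi₀]
    have h1 := hmin (x + Pi.single v 1)
    have h2 := hpos (x + Pi.single u 1)
    linarith
  -- step 3 : they also agree with the w-neighbour, which is a i₀ = M
  have h3 : a (x + Pi.single v 1) = a (x + Pi.single w 1) := by
    apply key_anti a hpos hrel v w u hvw (Ne.symm huv) (Ne.symm huw) x
    rw [hxw, hi₀]
    have := hpos (x + Pi.single w 1)
    rw [hxw, hi₀] at this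
    linarith [h2.ge]
  rw [hxw] at h3
  have hcm : a (x + Pi.single u 1) = (M : ℤ) := by rw [h2, h3, hi₀]
  -- step 4 : the relation at x with the pair (w, u)
  have r := hrel x w u (Ne.symm huw)
  rw [hxw] at r
  rw [hcm, hi₀] at r
  -- r : M * M - a x * a (i₀ + Pi.single u 1) = -1
  have hq := hmin x
  have hp := hmin (i₀ + Pi.single u 1)
  have hqp : a x * a (i₀ + Pi.single u 1) = (M : ℤ) * M + 1 := by linarith
  have hMeq : (M : ℤ) = 1 := by
    rcases (by omega : a (i₀ + Pi.single u 1) = (M : ℤ) ∨ (M : ℤ) + 1 ≤ a (i₀ + Pi.single u 1)) with h | h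
    · -- then M ∣ 1
      have hdvd : (M : ℤ) ∣ 1 := ⟨a x - M, by rw [h] at hqp; ring_nf; linarith [hqp]⟩
      have := Int.le_of_dvd one_pos hdvd
      omega
    · nlinarith [hqp, hq, h, hM1]
  exact ⟨i₀, by rw [hi₀, hMeq]⟩
end

section
/- Let n ≥ 3 and let (a_𝐢) be an anti-SL₂-tiling of ℤⁿ. Then there exists an integer c such that for all 𝐢, writing r = i₁ + ⋯ + i_n − c, we have a_𝐢 = F_{2r−1} if r ≥ 1 and a_𝐢 = F_{−2r+1} if r ≤ 0, where F is the Fibonacci sequence with F₁ = F₂ = 1. In particular, the anti-SL₂-tiling of ℤⁿ is unique up to translation and all its entries are odd-indexed Fibonacci numbers. -/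
private lemma fib_step_aux (r : ℕ) :
    (Nat.fib (2*r+3) : ℤ)^2 + 1 = (Nat.fib (2*r+1) : ℤ) * (Nat.fib (2*r+5) : ℤ) := by
  induction r with
  | zero =>
      have h3 : Nat.fib 3 = 2 := by decide
      have h5 : Nat.fib 5 = 5 := by decide
      norm_num [h3, h5]
  | succ r ih =>
      have e3 : Nat.fib (2*r+3) = Nat.fib (2*r+1) + Nat.fib (2*r+2) := by
        rw [show 2*r+3 = (2*r+1)+2 by ring, Nat.fib_add_two]
      have e4 : Nat.fib (2*r+4) = Nat.fib (2*r+2) + Nat.fib (2*r+3) := by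
        rw [show 2*r+4 = (2*r+2)+2 by ring, Nat.fib_add_two]
      have e5 : Nat.fib (2*r+5) = Nat.fib (2*r+3) + Nat.fib (2*r+4) := by
        rw [show 2*r+5 = (2*r+3)+2 by ring, Nat.fib_add_two]
      have e6 : Nat.fib (2*r+6) = Nat.fib (2*r+4) + Nat.fib (2*r+5) := by
        rw [show 2*r+6 = (2*r+4)+2 by ring, Nat.fib_add_two]
      have e7 : Nat.fib (2*r+7) = Nat.fib (2*r+5) + Nat.fib (2*r+6) := by
        rw [show 2*r+7 = (2*r+5)+2 by ring, Nat.fib_add_two]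
      rw [show 2*(r+1)+3 = 2*r+5 by ring, show 2*(r+1)+1 = 2*r+3 by ring,
          show 2*(r+1)+5 = 2*r+7 by ring, e7, e6, e5, e4, e3]
      rw [e5, e4, e3] at ih
      push_cast at ih ⊢
      linear_combination ih

theorem anti_sl2_is_fibonacci (n : ℕ) (hn : 3 ≤ n)
    (a : (Fin n → ℤ) → ℤ)
    (hpos : ∀ i, 0 < a i)
    (hrel : ∀ (i : Fin n → ℤ) (k ℓ : Fin n), k ≠ ℓ →
      a (i + Pi.single ℓ 1) * a (i + Pi.single k 1)
        - a i * a (i + Pi.single k 1 + Pi.single ℓ 1) = -1) :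
    ∃ c : ℤ, ∀ i : Fin n → ℤ,
      (1 ≤ (∑ s, i s) - c → a i = (Nat.fib (2 * ((∑ s, i s) - c) - 1).toNat : ℤ)) ∧
      ((∑ s, i s) - c ≤ 0 → a i = (Nat.fib (1 - 2 * ((∑ s, i s) - c)).toNat : ℤ)) := by
  classical
  -- Step 1: a (i + e_k) = a (i + e_l) for k ≠ l
  have h1 : ∀ (i : Fin n → ℤ) (k l : Fin n), k ≠ l →
      a (i + Pi.single k 1) = a (i + Pi.single l 1) := by
    intro i k l hkl
    obtain ⟨m, hm⟩ : ∃ m : Fin n, m ∉ ({k, l} : Finset (Fin n)) := by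
      by_contra h
      push_neg at h
      have hsub : (Finset.univ : Finset (Fin n)) ⊆ {k, l} := fun x _ => h x
      have h2 : (Finset.univ : Finset (Fin n)).card ≤ ({k, l} : Finset (Fin n)).card :=
        Finset.card_le_card hsub
      have h3 : ({k, l} : Finset (Fin n)).card ≤ 2 :=
        (Finset.card_insert_le _ _).trans (by simp)
      simp [Finset.card_univ] at h2
      omega
    simp only [Finset.mem_insert, Finset.mem_singleton, not_or] at hm
    obtain ⟨hmk, hml⟩ := hm
    have E1 := hrel i k l hkl
    have E2 := hrel i k m (Ne.symm hmk)
    have E3 := hrel i l m (Ne.symm hml)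
    have E4 := hrel (i + Pi.single k 1) l m (fun h => (hml (h ▸ rfl)).elim)
    have E5 := hrel (i + Pi.single l 1) k m (fun h => (hmk (h ▸ rfl)).elim)
    have E6 := hrel (i + Pi.single m 1) k l hkl
    rw [show i + Pi.single l 1 + Pi.single k 1 = i + Pi.single k 1 + Pi.single l 1 by ring] at E5
    rw [show i + Pi.single m 1 + Pi.single l 1 = i + Pi.single l 1 + Pi.single m 1 by ring,
        show i + Pi.single m 1 + Pi.single k 1 = i + Pi.single k 1 + Pi.single m 1 by ring,
        show i + Pi.single k 1 + Pi.single m 1 + Pi.single l 1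
           = i + Pi.single k 1 + Pi.single l 1 + Pi.single m 1 by ring] at E6
    set x := a i with hx
    set bk := a (i + Pi.single k 1) with hbk
    set bl := a (i + Pi.single l 1) with hbl
    set bm := a (i + Pi.single m 1) with hbm
    set P := a (i + Pi.single k 1 + Pi.single l 1) with hP'
    set Q := a (i + Pi.single k 1 + Pi.single m 1) with hQ'
    set R := a (i + Pi.single l 1 + Pi.single m 1) with hR'
    set A := a (i + Pi.single k 1 + Pi.single l 1 + Pi.single m 1) with hA'
    -- E1 : bl * bk - x * P = -1, E2 : bm * bk - x * Q = -1, E3 : bm * bl - x * R = -1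
    -- E4 : Q * P - bk * A = -1, E5 : R * P - bl * A = -1, E6 : R * Q - bm * A = -1
    have hQe : x * Q = bm * bk + 1 := by linarith
    have hPe : x * P = bl * bk + 1 := by linarith
    have hRe : x * R = bm * bl + 1 := by linarith
    have H4 : (x * Q) * (x * P) - x^2 * (bk * A) = -x^2 := by linear_combination x^2 * E4
    have H5 : (x * R) * (x * P) - x^2 * (bl * A) = -x^2 := by linear_combination x^2 * E5
    rw [hQe, hPe] at H4
    rw [hRe, hPe] at H5
    have key : (bk - bl) * (x^2 * A - bm * (bl * bk + 1)) = 0 := by linear_combination H5 - H4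
    rcases mul_eq_zero.mp key with h | h
    · exact sub_eq_zero.mp h
    · exfalso
      have hfinal : bl * bk + 1 + x^2 = 0 := by linear_combination H4 + bk * h
      nlinarith [hpos i, hpos (i + Pi.single k 1), hpos (i + Pi.single l 1)]
  -- Step 2: a (i + e_k - e_l) = a i
  have h2 : ∀ (i : Fin n → ℤ) (k l : Fin n), k ≠ l →
      a (i + Pi.single k 1 - Pi.single l 1) = a i := by
    intro i k l hkl
    have := h1 (i - Pi.single l 1) k l hkl
    rwa [show i - Pi.single l 1 + Pi.single l 1 = i by ring,
         show i - Pi.single l 1 + Pi.single k 1 = i + Pi.single k 1 - Pi.single l 1 by ring] at this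
  -- Step 3: a depends only on the coordinate sum
  have h3 : ∀ N : ℕ, ∀ i j : Fin n → ℤ, (∑ s, (j s - i s).natAbs) ≤ N →
      (∑ s, i s) = (∑ s, j s) → a i = a j := by
    intro N
    induction N with
    | zero =>
        intro i j hle hsum
        have hz : ∀ s, (j s - i s).natAbs = 0 := fun s =>
          Finset.sum_eq_zero_iff.mp (Nat.le_zero.mp hle) s (Finset.mem_univ s)
        have : i = j := funext fun s => by have := hz s; omega
        rw [this]
    | succ N ih =>
        intro i j hle hsum
        by_cases hij : i = j
        · rw [hij]
        · have hk : ∃ k, i k < j k := by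
            by_contra h
            push_neg at h
            apply hij
            funext s
            by_contra hs
            have hlt : j s < i s := lt_of_le_of_ne (h s) fun h' => hs h'.symm
            have hstrict : ∑ t, j t < ∑ t, i t :=
              Finset.sum_lt_sum (fun t _ => h t) ⟨s, Finset.mem_univ s, hlt⟩
            omega
          obtain ⟨k, hkv⟩ := hk
          have hl : ∃ l, j l < i l := by
            by_contra h
            push_neg at h
            have hstrict : ∑ t, i t < ∑ t, j t :=
              Finset.sum_lt_sum (fun t _ => h t) ⟨k, Finset.mem_univ k, hkv⟩
            omega
          obtain ⟨l, hlv⟩ := hl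
          have hkl : k ≠ l := by rintro rfl; omega
          have hstep := h2 i k l hkl
          set i' := i + Pi.single k 1 - Pi.single l 1 with hi'
          have hval : ∀ s, i' s = i s + (if s = k then 1 else 0) - (if s = l then 1 else 0) := by
            intro s
            simp [hi', Pi.single_apply]
          have hsum' : (∑ s, i' s) = (∑ s, j s) := by
            rw [← hsum, hi']
            simp [Finset.sum_add_distrib, Finset.sum_sub_distrib, Finset.sum_pi_single']
          have hsplit : ∀ F : Fin n → ℕ,
              ∑ s, F s = F k + F l + ∑ s ∈ Finset.univ \ {k, l}, F s := by
            intro F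
            rw [← Finset.sum_sdiff (Finset.subset_univ ({k, l} : Finset (Fin n))),
                Finset.sum_pair hkl]
            ring
          have hsplitA : ∑ s, (j s - i' s).natAbs
              = (j k - i' k).natAbs + (j l - i' l).natAbs
                + ∑ s ∈ Finset.univ \ {k, l}, (j s - i' s).natAbs := hsplit _
          have hsplitB : ∑ s, (j s - i s).natAbs
              = (j k - i k).natAbs + (j l - i l).natAbs
                + ∑ s ∈ Finset.univ \ {k, l}, (j s - i s).natAbs := hsplit _
          have hrest : ∑ s ∈ Finset.univ \ {k, l}, (j s - i' s).natAbs
              = ∑ s ∈ Finset.univ \ {k, l}, (j s - i s).natAbs := by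
            apply Finset.sum_congr rfl
            intro s hs
            simp only [Finset.mem_sdiff, Finset.mem_insert, Finset.mem_singleton, not_or] at hs
            rw [hval s, if_neg hs.2.1, if_neg hs.2.2]
            ring_nf
          have hk' : i' k = i k + 1 := by rw [hval k, if_pos rfl, if_neg hkl]; ring
          have hl' : i' l = i l - 1 := by rw [hval l, if_neg (Ne.symm hkl), if_pos rfl]; ring
          have hdec : (∑ s, (j s - i' s).natAbs) ≤ N := by omega
          rw [← hstep]
          exact ih i' j hdec hsum'
  have h4 : ∀ i j : Fin n → ℤ, (∑ s, i s) = (∑ s, j s) → a i = a j := fun i j h =>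
    h3 _ i j le_rfl h
  -- the one-dimensional profile
  have h0n : 0 < n := by omega
  have h1n : 1 < n := by omega
  set k0 : Fin n := ⟨0, h0n⟩ with hk0
  set k1 : Fin n := ⟨1, h1n⟩ with hk1
  have hk01 : k0 ≠ k1 := by simp [hk0, hk1, Fin.ext_iff]
  set f : ℤ → ℤ := fun t => a (Pi.single k0 t) with hf'
  have hf : ∀ i : Fin n → ℤ, a i = f (∑ s, i s) := by
    intro i
    apply h4
    simp [Finset.sum_pi_single']
  have hfpos : ∀ t, 0 < f t := fun t => hpos _
  have hfrel : ∀ t : ℤ, f t * f (t + 2) = f (t + 1) * f (t + 1) + 1 := by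
    intro t
    have key := hrel (Pi.single k0 t) k0 k1 hk01
    have s0 : (∑ s, (Pi.single k0 t : Fin n → ℤ) s) = t := by simp [Finset.sum_pi_single']
    have s1 : (∑ s, (Pi.single k0 t + Pi.single k1 1 : Fin n → ℤ) s) = t + 1 := by
      simp [Finset.sum_add_distrib, Finset.sum_pi_single']
    have s2 : (∑ s, (Pi.single k0 t + Pi.single k0 1 : Fin n → ℤ) s) = t + 1 := by
      simp [Finset.sum_add_distrib, Finset.sum_pi_single']
    have s3 : (∑ s, (Pi.single k0 t + Pi.single k0 1 + Pi.single k1 1 : Fin n → ℤ) s) = t + 2 := by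
      simp [Finset.sum_add_distrib, Finset.sum_pi_single']
      ring
    have A0 := hf (Pi.single k0 t)
    have A1 := hf (Pi.single k0 t + Pi.single k1 1)
    have A2 := hf (Pi.single k0 t + Pi.single k0 1)
    have A3 := hf (Pi.single k0 t + Pi.single k0 1 + Pi.single k1 1)
    rw [A0, A1, A2, A3, s0, s1, s2, s3] at key
    linarith
  -- find the minimum of f t + f (t+1)
  set S : Set ℕ := {N | ∃ t : ℤ, f t + f (t + 1) = (N : ℤ)} with hS'
  have hSne : S.Nonempty := by
    refine ⟨(f 0 + f 1).toNat, 0, ?_⟩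
    rw [Int.toNat_of_nonneg (by linarith [hfpos 0, hfpos 1])]
    norm_num
  obtain ⟨t0, ht0⟩ : ∃ t : ℤ, f t + f (t + 1) = ((sInf S : ℕ) : ℤ) := Nat.sInf_mem hSne
  have hmin : ∀ t : ℤ, ((sInf S : ℕ) : ℤ) ≤ f t + f (t + 1) := by
    intro t
    have hmem : (f t + f (t + 1)).toNat ∈ S :=
      ⟨t, (Int.toNat_of_nonneg (by linarith [hfpos t, hfpos (t + 1)])).symm⟩
    have h1' := Nat.sInf_le hmem
    have h2' : ((f t + f (t + 1)).toNat : ℤ) = f t + f (t + 1) :=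
      Int.toNat_of_nonneg (by linarith [hfpos t, hfpos (t + 1)])
    omega
  set x := f t0 with hxdef
  set y := f (t0 + 1) with hydef
  have r1 : x ≤ f (t0 + 2) := by
    have := hmin (t0 + 1)
    rw [show t0 + 1 + 1 = t0 + 2 by ring] at this
    omega
  have r2 : y ≤ f (t0 - 1) := by
    have := hmin (t0 - 1)
    rw [show t0 - 1 + 1 = t0 by ring] at this
    omega
  have e1 : x * f (t0 + 2) = y * y + 1 := hfrel t0
  have e2 : f (t0 - 1) * y = x * x + 1 := by
    have := hfrel (t0 - 1)
    rwa [show t0 - 1 + 2 = t0 + 1 by ring, show t0 - 1 + 1 = t0 by ring] at this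
  have ha' : x * x ≤ y * y + 1 := by nlinarith [hfpos t0, r1, e1]
  have hb' : y * y ≤ x * x + 1 := by nlinarith [hfpos (t0 + 1), r2, e2]
  have hxy : x = y := by
    rcases lt_trichotomy x y with h | h | h
    · exfalso
      have h' : x + 1 ≤ y := h
      nlinarith [hfpos t0]
    · exact h
    · exfalso
      have h' : y + 1 ≤ x := h
      nlinarith [hfpos (t0 + 1)]
  have hx1 : x = 1 := by
    have hdvd : x ∣ 1 := ⟨f (t0 + 2) - x, by rw [hxy] at e1 ⊢; linear_combination -e1⟩
    have := Int.le_of_dvd (by norm_num) hdvd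
    have := hfpos t0
    omega
  have hy1 : y = 1 := hxy ▸ hx1
  have hyv : f (t0 + 1) = 1 := by rw [← hydef]; exact hy1
  have hxv : f t0 = 1 := by rw [← hxdef]; exact hx1
  have hv2 : f (t0 + 2) = 2 := by rw [hx1, hy1] at e1; linarith
  have hv2' : f (t0 - 1) = 2 := by rw [hx1, hy1] at e2; linarith
  -- forward propagation
  have hfwd : ∀ q : ℕ, f (t0 + 1 + q) = (Nat.fib (2*q+1) : ℤ) ∧
      f (t0 + 2 + q) = (Nat.fib (2*q+3) : ℤ) := by
    intro q
    induction q with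
    | zero =>
        constructor
        · simpa using hyv
        · simpa [show Nat.fib 3 = 2 by decide] using hv2
    | succ q ih =>
        obtain ⟨ih1, ih2⟩ := ih
        have hfib1 : (0 : ℤ) < (Nat.fib (2*q+1) : ℤ) := by
          exact_mod_cast Nat.fib_pos.mpr (by omega)
        have hnext : f (t0 + 3 + q) = (Nat.fib (2*q+5) : ℤ) := by
          have h := hfrel (t0 + 1 + q)
          rw [show t0 + 1 + (q:ℤ) + 2 = t0 + 3 + q by ring,
              show t0 + 1 + (q:ℤ) + 1 = t0 + 2 + q by ring, ih1, ih2] at h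
          have hfs := fib_step_aux q
          have hcancel : (Nat.fib (2*q+1) : ℤ) * f (t0 + 3 + q)
              = (Nat.fib (2*q+1) : ℤ) * (Nat.fib (2*q+5) : ℤ) := by
            rw [h]; linear_combination hfs
          exact mul_left_cancel₀ (ne_of_gt hfib1) hcancel
        constructor
        · rw [show t0 + 1 + ((q+1 : ℕ) : ℤ) = t0 + 2 + (q:ℤ) by push_cast; ring, ih2,
              show 2*(q+1)+1 = 2*q+3 by ring]
        · rw [show t0 + 2 + ((q+1 : ℕ) : ℤ) = t0 + 3 + (q:ℤ) by push_cast; ring, hnext,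
              show 2*(q+1)+3 = 2*q+5 by ring]
  -- backward propagation
  have hbwd : ∀ q : ℕ, f (t0 - q) = (Nat.fib (2*q+1) : ℤ) ∧
      f (t0 - q - 1) = (Nat.fib (2*q+3) : ℤ) := by
    intro q
    induction q with
    | zero =>
        constructor
        · simpa using hxv
        · simpa [show Nat.fib 3 = 2 by decide] using hv2'
    | succ q ih =>
        obtain ⟨ih1, ih2⟩ := ih
        have hfib1 : (0 : ℤ) < (Nat.fib (2*q+1) : ℤ) := by
          exact_mod_cast Nat.fib_pos.mpr (by omega)
        have hnext : f (t0 - q - 2) = (Nat.fib (2*q+5) : ℤ) := by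
          have h := hfrel (t0 - q - 2)
          rw [show t0 - (q:ℤ) - 2 + 2 = t0 - q by ring,
              show t0 - (q:ℤ) - 2 + 1 = t0 - q - 1 by ring, ih1, ih2] at h
          have hfs := fib_step_aux q
          have hcancel : f (t0 - q - 2) * (Nat.fib (2*q+1) : ℤ)
              = (Nat.fib (2*q+5) : ℤ) * (Nat.fib (2*q+1) : ℤ) := by
            rw [h]; linear_combination hfs
          exact mul_right_cancel₀ (ne_of_gt hfib1) hcancel
        constructor
        · rw [show t0 - ((q+1 : ℕ) : ℤ) = t0 - (q:ℤ) - 1 by push_cast; ring, ih2,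
              show 2*(q+1)+1 = 2*q+3 by ring]
        · rw [show t0 - ((q+1 : ℕ) : ℤ) - 1 = t0 - (q:ℤ) - 2 by push_cast; ring, hnext,
              show 2*(q+1)+3 = 2*q+5 by ring]
  -- assemble
  refine ⟨t0, fun i => ⟨?_, ?_⟩⟩
  · intro hr
    obtain ⟨q, hq⟩ : ∃ q : ℕ, (q : ℤ) = (∑ s, i s) - t0 - 1 :=
      ⟨_, Int.toNat_of_nonneg (by omega)⟩
    rw [hf i, show (2 * ((∑ s, i s) - t0) - 1).toNat = 2*q+1 by omega,
        show (∑ s, i s) = t0 + 1 + (q:ℤ) by omega, (hfwd q).1]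
  · intro hr
    obtain ⟨q, hq⟩ : ∃ q : ℕ, (q : ℤ) = t0 - (∑ s, i s) :=
      ⟨_, Int.toNat_of_nonneg (by omega)⟩
    rw [hf i, show (1 - 2 * ((∑ s, i s) - t0)).toNat = 2*q+1 by omega,
        show (∑ s, i s) = t0 - (q:ℤ) by omega, (hbwd q).1]
end

section
/- For n ≥ 3 there exists no SL₂-tiling of ℤⁿ: there is no function a : ℤⁿ → ℤ_{>0} satisfying a_{𝐢+e_ℓ}·a_{𝐢+e_k} − a_𝐢·a_{𝐢+e_k+e_ℓ} = 1 for all 𝐢 ∈ ℤⁿ and all distinct k, ℓ. -/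
/-- No biinfinite positive integer sequence satisfies `f(m+1)² - f m * f(m+2) = 1`. -/
theorem no_sl2_seq (f : ℤ → ℤ) (hpos : ∀ m, 0 < f m)
    (hrec : ∀ m, f (m + 1) * f (m + 1) - f m * f (m + 2) = 1) : False := by
  have hne : ∀ m, f (m + 1) ≠ f m := by
    intro m heq
    have R := hrec m
    rw [heq] at R
    have h1 : f m * (f m - f (m + 2)) = 1 := by linear_combination R
    have h2 : f m = 1 := Int.eq_one_of_mul_eq_one_right (hpos m).le h1
    rw [h2, one_mul] at h1
    have := hpos (m + 2)
    omega
  have hdec : ∀ m, f (m + 1) < f m → f (m + 2) < f (m + 1) := by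
    intro m h
    by_contra hge
    push_neg at hge
    have R := hrec m
    nlinarith [hpos (m + 1), hpos m]
  have hnotdec : ∀ m, ¬ f (m + 1) < f m := by
    intro m0 h0
    have step : ∀ j : ℕ, f (m0 + (j : ℤ) + 1) < f (m0 + (j : ℤ)) ∧
        f (m0 + (j : ℤ) + 1) ≤ f (m0 + 1) - (j : ℤ) := by
      intro j
      induction j with
      | zero => simpa using h0
      | succ j ih =>
        have h1 := hdec (m0 + (j : ℤ)) ih.1
        have e1 : m0 + ((j : ℤ) + 1) + 1 = m0 + (j : ℤ) + 2 := by ring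
        have e2 : m0 + ((j : ℤ) + 1) = m0 + (j : ℤ) + 1 := by ring
        push_cast
        rw [e1, e2]
        exact ⟨h1, by linarith [ih.2]⟩
    obtain ⟨_, hb⟩ := step (f (m0 + 1)).toNat
    rw [Int.toNat_of_nonneg (hpos (m0 + 1)).le] at hb
    linarith [hpos (m0 + (f (m0 + 1)) + 1)]
  have hinc : ∀ m, f m < f (m + 1) := fun m =>
    lt_of_le_of_ne (not_lt.mp (hnotdec m)) (hne m).symm
  have step2 : ∀ j : ℕ, f (0 - (j : ℤ)) ≤ f 0 - (j : ℤ) := by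
    intro j
    induction j with
    | zero => simp
    | succ j ih =>
      have h := hinc (0 - ((j : ℤ) + 1))
      have e : (0 : ℤ) - ((j : ℤ) + 1) + 1 = 0 - (j : ℤ) := by ring
      rw [e] at h
      push_cast
      linarith [ih]
  obtain hb := step2 (f 0).toNat
  rw [Int.toNat_of_nonneg (hpos 0).le] at hb
  linarith [hpos (0 - f 0)]

theorem no_sl2_tiling (n : ℕ) (hn : 3 ≤ n) :
    ¬ ∃ a : (Fin n → ℤ) → ℤ,
      (∀ i, 0 < a i) ∧
      (∀ (i : Fin n → ℤ) (k ℓ : Fin n), k ≠ ℓ →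
        a (i + Pi.single ℓ 1) * a (i + Pi.single k 1)
          - a i * a (i + Pi.single k 1 + Pi.single ℓ 1) = 1) := by
  rintro ⟨a, hpos, hrel⟩
  set p : Fin n := ⟨0, by omega⟩ with hp
  set q : Fin n := ⟨1, by omega⟩ with hq
  set r : Fin n := ⟨2, by omega⟩ with hr
  have hpq : p ≠ q := by simp [hp, hq, Fin.ext_iff]
  have hpr : p ≠ r := by simp [hp, hr, Fin.ext_iff]
  have hqr : q ≠ r := by simp [hq, hr, Fin.ext_iff]
  -- key geometric lemma: steps in directions q and r give equal values
  have hA : ∀ i : Fin n → ℤ, a (i + Pi.single r 1) = a (i + Pi.single q 1) := by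
    intro i
    have R1 := hrel i p q hpq
    have R2 := hrel i p r hpr
    have R4 := hrel (i + Pi.single r 1) p q hpq
    have R5 := hrel (i + Pi.single q 1) p r hpr
    rw [show i + Pi.single r 1 + Pi.single p 1 + Pi.single q 1
          = i + Pi.single p 1 + Pi.single q 1 + Pi.single r 1 from by abel,
        show i + Pi.single r 1 + Pi.single p 1
          = i + Pi.single p 1 + Pi.single r 1 from by abel,
        show i + Pi.single r 1 + Pi.single q 1
          = i + Pi.single q 1 + Pi.single r 1 from by abel] at R4
    rw [show i + Pi.single q 1 + Pi.single p 1 + Pi.single r 1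
          = i + Pi.single p 1 + Pi.single q 1 + Pi.single r 1 from by abel,
        show i + Pi.single q 1 + Pi.single p 1
          = i + Pi.single p 1 + Pi.single q 1 from by abel] at R5
    have key : (a (i + Pi.single q 1 + Pi.single r 1) + a i)
        * (a (i + Pi.single r 1) - a (i + Pi.single q 1)) = 0 := by
      linear_combination (a i * a (i + Pi.single q 1)) * R4
        - (a i * a (i + Pi.single r 1)) * R5
        + (a (i + Pi.single q 1) * a (i + Pi.single q 1 + Pi.single r 1)) * R2
        - (a (i + Pi.single r 1) * a (i + Pi.single q 1 + Pi.single r 1)) * R1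
    have hsum : 0 < a (i + Pi.single q 1 + Pi.single r 1) + a i :=
      add_pos (hpos _) (hpos _)
    rcases mul_eq_zero.mp key with h | h
    · exact absurd h (ne_of_gt hsum)
    · exact sub_eq_zero.mp h
  -- build the diagonal sequence
  have s1 : ∀ m : ℤ, (Pi.single q m : Fin n → ℤ) + Pi.single q 1 = Pi.single q (m + 1) := by
    intro m; rw [← Pi.single_add]
  apply no_sl2_seq (fun m => a (Pi.single q m)) (fun m => hpos _)
  intro m
  have R := hrel (Pi.single q m) q r hqr
  rw [hA (Pi.single q m)] at R
  rw [hA ((Pi.single q m : Fin n → ℤ) + Pi.single q 1)] at R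
  rw [s1 m] at R
  rw [s1 (m + 1), show (m + 1 + 1 : ℤ) = m + 2 from by ring] at R
  exact R
end

section
/- There is no SL₂-tiling of ℤ³: there is no a : ℤ³ → ℤ_{>0} with a_{𝐢+e_ℓ}·a_{𝐢+e_k} − a_𝐢·a_{𝐢+e_k+e_ℓ} = 1 for all 𝐢 ∈ ℤ³ and all 1 ≤ k < ℓ ≤ 3. -/
private lemma cube_aux (m A1 A2 A3 A12 A13 A23 A123 : ℤ) (hm : 0 < m) (h12 : 0 < A12)
    (e2 : A3 * A1 - m * A13 = 1) (e3 : A3 * A2 - m * A23 = 1)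
    (e5 : A23 * A12 - A2 * A123 = 1) (e6 : A13 * A12 - A1 * A123 = 1) : A1 = A2 := by
  by_contra hne
  have c12 : (A1 - A2) * (A3 * A12 - m * A123) = 0 := by
    linear_combination A12 * e2 - A12 * e3 + m * e6 - m * e5
  have hx : A3 * A12 - m * A123 = 0 := by
    rcases mul_eq_zero.mp c12 with h | h
    · exact absurd (sub_eq_zero.mp h) hne
    · exact h
  have key : m + A12 = 0 := by linear_combination -(m * e6) + A1 * hx - A12 * e2
  linarith

theorem no_sl2_tiling_Z3 :
    ¬ ∃ a : (Fin 3 → ℤ) → ℤ,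
      (∀ i, 0 < a i) ∧
      (∀ (i : Fin 3 → ℤ) (k ℓ : Fin 3), k < ℓ →
        a (i + Pi.single ℓ 1) * a (i + Pi.single k 1)
          - a i * a (i + Pi.single k 1 + Pi.single ℓ 1) = 1) := by
  rintro ⟨a, hpos, hrel⟩
  classical
  obtain ⟨m, ⟨p, hpm⟩, hmin'⟩ :=
    Int.exists_least_of_bdd (P := fun z => ∃ i, a i = z)
      ⟨1, by rintro z ⟨i, rfl⟩; exact hpos i⟩ ⟨a 0, 0, rfl⟩
  have hmin : ∀ i, m ≤ a i := fun i => hmin' (a i) ⟨i, rfl⟩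
  have hm : 0 < m := hpm ▸ hpos p
  -- cube at base p
  have e1 := hrel p 0 1 (by decide)
  have e2 := hrel p 0 2 (by decide)
  have e3 := hrel p 1 2 (by decide)
  have e5 := hrel (p + Pi.single 1 1) 0 2 (by decide)
  have e6 := hrel (p + Pi.single 0 1) 1 2 (by decide)
  have E5a : p + Pi.single 1 1 + Pi.single 0 1 = p + Pi.single 0 1 + Pi.single 1 1 := by abel
  rw [E5a] at e5
  rw [hpm] at e1 e2 e3
  have hA : a (p + Pi.single 0 1) = a (p + Pi.single 1 1) :=
    cube_aux m _ _ _ _ _ _ _ hm (hpos (p + Pi.single 0 1 + Pi.single 1 1)) e2 e3 e5 e6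
  -- cube at base q = p - e3
  set q : Fin 3 → ℤ := p - Pi.single 2 1 with hqdef
  have f1 := hrel q 0 2 (by decide)
  have f2 := hrel q 1 2 (by decide)
  have f3 := hrel q 0 1 (by decide)
  have f4 := hrel (q + Pi.single 0 1) 1 2 (by decide)
  have Eq1 : q + Pi.single 2 1 = p := by rw [hqdef]; abel
  have Eq2 : q + Pi.single 0 1 + Pi.single 2 1 = p + Pi.single 0 1 := by rw [hqdef]; abel
  have Eq3 : q + Pi.single 1 1 + Pi.single 2 1 = p + Pi.single 1 1 := by rw [hqdef]; abel
  have Eq4 : q + Pi.single 0 1 + Pi.single 1 1 + Pi.single 2 1 = p + Pi.single 0 1 + Pi.single 1 1 := by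
    rw [hqdef]; abel
  rw [Eq1, Eq2] at f1
  rw [Eq1, Eq3] at f2
  rw [Eq2, Eq4] at f4
  rw [hpm] at f1 f2
  -- f1 : m * B1 - B * t = 1 ; f2 : m * B2 - B * t2 = 1 ; f3 : B2 * B1 - B * B12 = 1
  -- f4 : t * B12 - B1 * s = 1
  have hB12eq : a (q + Pi.single 0 1) = a (q + Pi.single 1 1) :=
    mul_left_cancel₀ hm.ne' (by linear_combination f1 - f2 + a q * hA)
  have h3' : a (q + Pi.single 0 1) * a (q + Pi.single 0 1)
      - a q * a (q + Pi.single 0 1 + Pi.single 1 1) = 1 := by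
    linear_combination f3 + a (q + Pi.single 0 1) * hB12eq
  have h4 : a (p + Pi.single 0 1) * a (p + Pi.single 0 1)
      - m * a (p + Pi.single 0 1 + Pi.single 1 1) = 1 := by
    linear_combination e1 + a (p + Pi.single 0 1) * hA
  have hq0 : (a (q + Pi.single 0 1) - m)
      * (a (q + Pi.single 0 1) + a (p + Pi.single 0 1 + Pi.single 1 1)) = 0 := by
    linear_combination (-(a (p + Pi.single 0 1) * a (q + Pi.single 0 1 + Pi.single 1 1))) * f1
      + (m * a (q + Pi.single 0 1) - 1) * f4
      + (a (p + Pi.single 0 1) * a (p + Pi.single 0 1)) * h3'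
      - (a (q + Pi.single 0 1) * a (q + Pi.single 0 1) - 1) * h4
  rcases mul_eq_zero.mp hq0 with h | h
  · have h1' : m * m - a q * a (p + Pi.single 0 1) = 1 := by linear_combination f1 - m * h
    have hBt : m * m ≤ a q * a (p + Pi.single 0 1) :=
      mul_le_mul (hmin q) (hmin (p + Pi.single 0 1)) hm.le (hm.le.trans (hmin q))
    linarith
  · have h5 := hpos (q + Pi.single 0 1)
    have h6 := hpos (p + Pi.single 0 1 + Pi.single 1 1)
    linarith
end

section
/- Let ε be a 3×3 signature matrix. If an ε-SL₂-tiling of ℤ³ exists, then ε₁₂·ε₁₃·ε₂₃ = −1. -/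
private lemma descent_aux (s : ℤ → ℤ) (hp : ∀ n, 0 < s n)
    (h : ∀ n, s (n+1) * s (n+1) - s n * s (n+2) = 1) : False := by
  have key : ∀ n, s (n+1) ≤ s n → s (n+2) < s (n+1) := by
    intro n hle
    nlinarith [hp n, hp (n+1), hp (n+2), h n]
  by_cases hmono : ∀ n, s n < s (n+1)
  · have hdec : ∀ k : ℕ, s (0 - (k:ℤ)) + k ≤ s 0 := by
      intro k
      induction k with
      | zero => simp
      | succ k ih =>
        have h1 := hmono (0 - ((k:ℤ)+1))
        have h2 : 0 - ((k:ℤ)+1) + 1 = 0 - (k:ℤ) := by ring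
        rw [h2] at h1
        push_cast
        linarith
    have h1 := hdec (s 0).toNat
    have h2 : ((s 0).toNat : ℤ) = s 0 := Int.toNat_of_nonneg (hp 0).le
    have h3 := hp (0 - ((s 0).toNat : ℤ))
    linarith
  · push_neg at hmono
    obtain ⟨n, hn⟩ := hmono
    have hn' : s (n+1) ≤ s n := not_lt.mp (by simpa using hn)
    have hdesc : ∀ k : ℕ, s (n + k + 1) ≤ s (n + k) ∧ s (n + k + 1) + k ≤ s (n+1) := by
      intro k
      induction k with
      | zero => exact ⟨by simpa using hn', by simp⟩
      | succ k ih =>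
        have h2 := key (n + k) ih.1
        push_cast
        have e : n + ((k:ℤ)+1) + 1 = n + (k:ℤ) + 2 := by ring
        have e' : n + ((k:ℤ)+1) = n + (k:ℤ) + 1 := by ring
        rw [e, e']
        refine ⟨h2.le, ?_⟩
        have := ih.2
        push_cast at this
        linarith
    have h1 := (hdesc (s (n+1)).toNat).2
    have h2 : ((s (n+1)).toNat : ℤ) = s (n+1) := Int.toNat_of_nonneg (hp _).le
    have h3 := hp (n + ((s (n+1)).toNat : ℤ) + 1)
    linarith
private lemma core_aux (a : (Fin 3 → ℤ) → ℤ) (hp : ∀ i, 0 < a i) (x y z : Fin 3 → ℤ)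
    (hxz : ∀ i, a (i + z) * a (i + x) - a i * a (i + x + z) = 1)
    (hyz : ∀ i, a (i + z) * a (i + y) - a i * a (i + y + z) = 1) :
    ∀ i, a (i + x + z) = a (i + y + z) := by
  intro i
  have R13 := hxz i
  have R23 := hyz i
  have S1 := hyz (i + x)
  -- S1 : a (i+x+z) * a (i+x+y) - a (i+x) * a (i+x+y+z) = 1
  have S2 := hxz (i + y)
  rw [show i + y + x = i + x + y from by abel] at S2
  by_contra hne
  have key : (a (i+x+z) - a (i+y+z)) * (a (i+x+y) * a (i+z) - a i * a (i+x+y+z)) = 0 := by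
    linear_combination a (i+z) * S1 - a (i+z) * S2 + a (i+x+y+z) * R13 - a (i+x+y+z) * R23
  rcases mul_eq_zero.mp key with h0 | h0
  · exact hne (sub_eq_zero.mp h0)
  · have hc : a (i+x+y) * a (i+z) = a i * a (i+x+y+z) := sub_eq_zero.mp h0
    have hm : a i + a (i+x+y) = 0 := by
      linear_combination (-(a i)) * S1 - a (i+x+y) * R13 + a (i+x) * hc
    have := hp i
    have := hp (i+x+y)
    linarith

private lemma no_tiling_aux (a : (Fin 3 → ℤ) → ℤ) (hp : ∀ i, 0 < a i) (d1 d2 d3 : Fin 3 → ℤ)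
    (h12 : ∀ i, a (i + d2) * a (i + d1) - a i * a (i + d1 + d2) = 1)
    (h13 : ∀ i, a (i + d3) * a (i + d1) - a i * a (i + d1 + d3) = 1)
    (h23 : ∀ i, a (i + d3) * a (i + d2) - a i * a (i + d2 + d3) = 1) : False := by
  have hfg := core_aux a hp d1 d2 d3 h13 h23
  have h12' : ∀ i, a (i + d1) * a (i + d2) - a i * a (i + d2 + d1) = 1 := by
    intro i
    rw [mul_comm, show i + d2 + d1 = i + d1 + d2 from by abel]
    exact h12 i
  have h13' : ∀ i, a (i + d1) * a (i + d3) - a i * a (i + d3 + d1) = 1 := by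
    intro i
    rw [mul_comm, show i + d3 + d1 = i + d1 + d3 from by abel]
    exact h13 i
  have hef := core_aux a hp d2 d3 d1 h12' h13'
  have hA12 : ∀ j, a (j + d1) = a (j + d2) := by
    intro j
    have := hfg (j - d3)
    rwa [show j - d3 + d1 + d3 = j + d1 from by abel, show j - d3 + d2 + d3 = j + d2 from by abel] at this
  have hA23 : ∀ j, a (j + d2) = a (j + d3) := by
    intro j
    have := hef (j - d1)
    rwa [show j - d1 + d2 + d1 = j + d2 from by abel, show j - d1 + d3 + d1 = j + d3 from by abel] at this
  have hs : ∀ n : ℤ, a ((n+1) • d1) * a ((n+1) • d1) - a (n • d1) * a ((n+2) • d1) = 1 := by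
    intro n
    have h := h12 (n • d1)
    rw [← hA12 (n • d1), ← hA12 (n • d1 + d1)] at h
    rwa [show n • d1 + d1 + d1 = (n+2) • d1 from by
        rw [add_smul]; rw [show (2:ℤ) • d1 = d1 + d1 from two_smul ℤ d1]; abel,
      show n • d1 + d1 = (n+1) • d1 from by rw [add_smul, one_smul]] at h
  exact descent_aux (fun n => a (n • d1)) (fun n => hp _) hs

private lemma flip_snd_aux (a : (Fin 3 → ℤ) → ℤ) (v : ℤ) (k ℓ : Fin 3)
    (h : ∀ i, a (i + Pi.single ℓ 1) * a (i + Pi.single k 1)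
      - a i * a (i + Pi.single k 1 + Pi.single ℓ 1) = v) :
    ∀ i, a (i + -Pi.single ℓ 1) * a (i + Pi.single k 1)
      - a i * a (i + Pi.single k 1 + -Pi.single ℓ 1) = -v := by
  intro i
  have h' := h (i + -Pi.single ℓ 1)
  rw [show i + -Pi.single ℓ 1 + Pi.single k 1 + Pi.single ℓ 1 = i + Pi.single k 1 from by abel,
      show i + -Pi.single ℓ 1 + Pi.single k 1 = i + Pi.single k 1 + -Pi.single ℓ 1 from by abel,
      show i + -Pi.single ℓ 1 + Pi.single ℓ 1 = i from by abel] at h'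
  linear_combination -h'

private lemma flip_fst_aux (a : (Fin 3 → ℤ) → ℤ) (v : ℤ) (k ℓ : Fin 3)
    (h : ∀ i, a (i + Pi.single ℓ 1) * a (i + Pi.single k 1)
      - a i * a (i + Pi.single k 1 + Pi.single ℓ 1) = v) :
    ∀ i, a (i + Pi.single ℓ 1) * a (i + -Pi.single k 1)
      - a i * a (i + -Pi.single k 1 + Pi.single ℓ 1) = -v := by
  intro i
  have h' := h (i + -Pi.single k 1)
  rw [show i + -Pi.single k 1 + Pi.single k 1 = i from by abel] at h'
  linear_combination -h'

private lemma flip_both_aux (a : (Fin 3 → ℤ) → ℤ) (v : ℤ) (k ℓ : Fin 3)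
    (h : ∀ i, a (i + Pi.single ℓ 1) * a (i + Pi.single k 1)
      - a i * a (i + Pi.single k 1 + Pi.single ℓ 1) = v) :
    ∀ i, a (i + -Pi.single ℓ 1) * a (i + -Pi.single k 1)
      - a i * a (i + -Pi.single k 1 + -Pi.single ℓ 1) = v := by
  intro i
  have h' := h (i + -Pi.single k 1 + -Pi.single ℓ 1)
  rw [show i + -Pi.single k 1 + -Pi.single ℓ 1 + Pi.single k 1 + Pi.single ℓ 1 = i from by abel,
      show i + -Pi.single k 1 + -Pi.single ℓ 1 + Pi.single k 1 = i + -Pi.single ℓ 1 from by abel,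
      show i + -Pi.single k 1 + -Pi.single ℓ 1 + Pi.single ℓ 1 = i + -Pi.single k 1 from by abel] at h'
  linear_combination h'



theorem sl2_tiling_Z3_signature_condition (ε : Fin 3 → Fin 3 → ℤ)
    (hsym : ∀ k ℓ, ε k ℓ = ε ℓ k)
    (hoff : ∀ k ℓ, k ≠ ℓ → ε k ℓ = 1 ∨ ε k ℓ = -1)
    (hdiag : ∀ k, ε k k = -1)
    (hexists : ∃ a : (Fin 3 → ℤ) → ℤ,
      (∀ i, 0 < a i) ∧
      (∀ (i : Fin 3 → ℤ) (k ℓ : Fin 3), k ≠ ℓ →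
        a (i + Pi.single ℓ 1) * a (i + Pi.single k 1)
          - a i * a (i + Pi.single k 1 + Pi.single ℓ 1) = ε k ℓ)) :
    ε 0 1 * ε 0 2 * ε 1 2 = -1 := by
  obtain ⟨a, hp, hrel⟩ := hexists
  have rel : ∀ (k ℓ : Fin 3), k ≠ ℓ → ∀ i, a (i + Pi.single ℓ 1) * a (i + Pi.single k 1)
      - a i * a (i + Pi.single k 1 + Pi.single ℓ 1) = ε k ℓ := fun k ℓ hkl i => hrel i k ℓ hkl
  rcases hoff 0 1 (by decide) with hP | hP <;>
    rcases hoff 0 2 (by decide) with hQ | hQ <;>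
      rcases hoff 1 2 (by decide) with hR | hR
  -- case (1,1,1)
  · exfalso
    exact no_tiling_aux a hp (Pi.single 0 1) (Pi.single 1 1) (Pi.single 2 1)
      (fun i => (rel 0 1 (by decide) i).trans hP)
      (fun i => (rel 0 2 (by decide) i).trans hQ)
      (fun i => (rel 1 2 (by decide) i).trans hR)
  · rw [hP, hQ, hR]; norm_num
  · rw [hP, hQ, hR]; norm_num
  -- case (1,-1,-1)
  · exfalso
    exact no_tiling_aux a hp (Pi.single 0 1) (Pi.single 1 1) (-Pi.single 2 1)
      (fun i => (rel 0 1 (by decide) i).trans hP)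
      (fun i => (flip_snd_aux a _ 0 2 (rel 0 2 (by decide)) i).trans (by rw [hQ]; norm_num))
      (fun i => (flip_snd_aux a _ 1 2 (rel 1 2 (by decide)) i).trans (by rw [hR]; norm_num))
  · rw [hP, hQ, hR]; norm_num
  -- case (-1,1,-1)
  · exfalso
    exact no_tiling_aux a hp (Pi.single 0 1) (-Pi.single 1 1) (Pi.single 2 1)
      (fun i => (flip_snd_aux a _ 0 1 (rel 0 1 (by decide)) i).trans (by rw [hP]; norm_num))
      (fun i => (rel 0 2 (by decide) i).trans hQ)
      (fun i => (flip_fst_aux a _ 1 2 (rel 1 2 (by decide)) i).trans (by rw [hR]; norm_num))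
  -- case (-1,-1,1)
  · exfalso
    exact no_tiling_aux a hp (Pi.single 0 1) (-Pi.single 1 1) (-Pi.single 2 1)
      (fun i => (flip_snd_aux a _ 0 1 (rel 0 1 (by decide)) i).trans (by rw [hP]; norm_num))
      (fun i => (flip_snd_aux a _ 0 2 (rel 0 2 (by decide)) i).trans (by rw [hQ]; norm_num))
      (fun i => (flip_both_aux a _ 1 2 (rel 1 2 (by decide)) i).trans hR)
  · rw [hP, hQ, hR]; norm_num
end

section
/- Let ε be a 3×3 signature matrix with ε₁₂·ε₁₃·ε₂₃ = −1. Then there exists an ε-SL₂-tiling of ℤ³, and it is unique up to translation. -/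
/-!
Write `ε k ℓ = -(σ k * σ ℓ)` for `k ≠ ℓ` with signs `σ k = ±1`; this is possible because
`ε 0 1 * ε 0 2 * ε 1 2 = -1`. Reflecting the coordinates by `σ` turns `ε`-tilings into tilings
with all entries `-1`, so it suffices to treat that case. There, computing the far corner of a
unit cube through two different faces shows `a (i + e k) = a (i + e ℓ)`, so `a` only depends on
the coordinate sum, and the resulting sequence satisfies `F s * F (s + 2) = F (s + 1) ^ 2 + 1`.
At a minimum of a positive such sequence two consecutive values are `1`, and from there the
recurrence determines it: it is a shift of the odd-indexed Fibonacci numbers `fib (2 s + 1)`.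
Conversely `i ↦ fib (2 (σ 0 i 0 + σ 1 i 1 + σ 2 i 2) + 1)` is an `ε`-tiling.
-/

open Finset Function

def oddFib (s : ℤ) : ℤ := Int.fib (2 * s + 1)

lemma oddFib_pos (s : ℤ) : 0 < oddFib s := Int.fib_two_mul_add_one_pos

lemma oddFib_neg_one : oddFib (-1) = 1 := rfl

lemma oddFib_zero : oddFib 0 = 1 := rfl

lemma oddFib_mul_oddFib_add_two (s : ℤ) :
    oddFib s * oddFib (s + 2) = oddFib (s + 1) ^ 2 + 1 := by
  have catalan := Int.fib_add_sq_sub_fib_mul_fib_add_two_mul (2 * s + 1) 2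
  have hodd : Odd (2 * s + 1).natAbs := Int.natAbs_odd.mpr (odd_two_mul_add_one s)
  rw [hodd.neg_one_pow, Int.fib_two, show 2 * s + 1 + 2 = 2 * (s + 1) + 1 by ring,
    show 2 * s + 1 + 2 * 2 = 2 * (s + 2) + 1 by ring] at catalan
  unfold oddFib
  linear_combination -catalan

lemma Int.eq_one_and_eq_one_or_eq_one_of_mul_eq_sq_add_one {m p q : ℤ} (hm : 0 < m)
    (hp : m ≤ p) (hq : m ≤ q) (h : p * q = m ^ 2 + 1) : m = 1 ∧ (p = 1 ∨ q = 1) := by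
  rcases hp.eq_or_lt with rfl | hp <;> rcases hq.eq_or_lt with rfl | hq
  · nlinarith
  · have hm1 : m = 1 := by nlinarith
    exact ⟨hm1, .inl hm1⟩
  · have hm1 : m = 1 := by nlinarith
    exact ⟨hm1, .inr hm1⟩
  · nlinarith

section Recurrence

variable {F G : ℤ → ℤ}

theorem eq_of_mul_add_two_eq_sq_add_one (hF0 : ∀ s, F s ≠ 0)
    (hF : ∀ s, F s * F (s + 2) = F (s + 1) ^ 2 + 1) (hG : ∀ s, G s * G (s + 2) = G (s + 1) ^ 2 + 1)
    {t : ℤ} (h₀ : F t = G t) (h₁ : F (t + 1) = G (t + 1)) : F = G := by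
  suffices key : ∀ s, F s = G s ∧ F (s + 1) = G (s + 1) from funext fun s => (key s).1
  intro s
  induction s using Int.inductionOn' (b := t) with
  | zero => exact ⟨h₀, h₁⟩
  | succ s _ ih =>
    refine ⟨ih.2, mul_left_cancel₀ (hF0 s) ?_⟩
    rw [add_assoc, one_add_one_eq_two, hF, ih.1, ih.2, hG]
  | pred s _ ih =>
    have h₂ : F (s - 1 + 2) = G (s - 1 + 2) := by rw [show s - 1 + 2 = s + 1 by ring]; exact ih.2
    refine ⟨mul_right_cancel₀ (hF0 (s - 1 + 2)) ?_, by rw [sub_add_cancel]; exact ih.1⟩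
    rw [hF, h₂, hG, sub_add_cancel, ih.1]

theorem exists_eq_one_of_mul_add_two_eq_sq_add_one (hpos : ∀ s, 0 < F s)
    (hF : ∀ s, F s * F (s + 2) = F (s + 1) ^ 2 + 1) : ∃ t, F t = 1 ∧ F (t + 1) = 1 := by
  obtain ⟨_, ⟨s, rfl⟩, hmin⟩ := Int.exists_least_of_bdd (P := fun z => ∃ s, F s = z)
    ⟨0, fun _ ⟨s, hs⟩ => hs ▸ (hpos s).le⟩ ⟨F 0, 0, rfl⟩
  have h := hF (s - 1)
  rw [show s - 1 + 2 = s + 1 by ring, sub_add_cancel] at h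
  obtain ⟨h₁, hp | hq⟩ := Int.eq_one_and_eq_one_or_eq_one_of_mul_eq_sq_add_one (hpos s)
    (hmin _ ⟨s - 1, rfl⟩) (hmin _ ⟨s + 1, rfl⟩) h
  · exact ⟨s - 1, hp, by rwa [sub_add_cancel]⟩
  · exact ⟨s, h₁, hq⟩

theorem exists_eq_oddFib_add (hpos : ∀ s, 0 < F s)
    (hF : ∀ s, F s * F (s + 2) = F (s + 1) ^ 2 + 1) : ∃ c, ∀ s, F s = oddFib (s + c) := by
  obtain ⟨t, h₀, h₁⟩ := exists_eq_one_of_mul_add_two_eq_sq_add_one hpos hF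
  refine ⟨-1 - t, congrFun (eq_of_mul_add_two_eq_sq_add_one (fun s => (hpos s).ne') hF
    (fun s => ?_) (t := t) ?_ ?_)⟩
  · simpa only [add_right_comm s _ (-1 - t)] using oddFib_mul_oddFib_add_two (s + (-1 - t))
  · rw [h₀, show t + (-1 - t) = -1 by ring, oddFib_neg_one]
  · rw [h₁, show t + 1 + (-1 - t) = 0 by ring, oddFib_zero]

end Recurrence

section SquareDet

variable {G R : Type*} [AddCommGroup G] [CommRing R]

def squareDet (a : G → R) (i x y : G) : R := a (i + y) * a (i + x) - a i * a (i + x + y)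

variable (a : G → R) (i x y : G)

lemma squareDet_comm : squareDet a i x y = squareDet a i y x := by
  rw [squareDet, squareDet, add_right_comm, mul_comm]

lemma squareDet_neg_left : squareDet a i (-x) y = -squareDet a (i - x) x y := by
  simp only [squareDet, sub_add_cancel, ← sub_eq_add_neg]
  ring

lemma squareDet_neg_right : squareDet a i x (-y) = -squareDet a (i - y) x y := by
  rw [squareDet_comm, squareDet_neg_left, squareDet_comm]

lemma squareDet_comp {H : Type*} [AddCommGroup H] (φ : H →+ G) (i x y : H) :
    squareDet (a ∘ φ) i x y = squareDet a (φ i) (φ x) (φ y) := by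
  simp only [squareDet, comp_apply, map_add]

end SquareDet

lemma apply_add_eq_of_squareDet_eq_neg_one {G : Type*} [AddCommGroup G] {a : G → ℤ}
    (hpos : ∀ j, 0 < a j) {u v w : G} (huv : ∀ j, squareDet a j u v = -1)
    (huw : ∀ j, squareDet a j u w = -1) (hvw : ∀ j, squareDet a j v w = -1) (i : G) :
    a (i + u) = a (i + v) := by
  have h₁ := huv i
  have h₂ := huw i
  have h₃ := hvw i
  have h₄ := hvw (i + u)
  have h₅ := huw (i + v)
  simp only [squareDet, add_right_comm i v u] at h₁ h₂ h₃ h₄ h₅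
  -- the corner `a (i + u + v + w)` computed from the faces at `i + u` and at `i + v`
  have hu : a i ^ 2 * (a (i + u) * a (i + u + v + w)) =
      (a (i + v) * a (i + u) + 1) * (a (i + w) * a (i + u) + 1) + a i ^ 2 := by
    linear_combination (-(a i ^ 2)) * h₄ - a i * a (i + u + w) * h₁
      - (a (i + v) * a (i + u) + 1) * h₂
  have hv : a i ^ 2 * (a (i + v) * a (i + u + v + w)) =
      (a (i + v) * a (i + u) + 1) * (a (i + w) * a (i + v) + 1) + a i ^ 2 := by
    linear_combination (-(a i ^ 2)) * h₅ - a i * a (i + v + w) * h₁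
      - (a (i + v) * a (i + u) + 1) * h₃
  have key : (a (i + u) - a (i + v)) * (a i ^ 2 + a (i + u) * a (i + v) + 1) = 0 := by
    linear_combination a (i + v) * hu - a (i + u) * hv
  have hpos' : 0 < a i ^ 2 + a (i + u) * a (i + v) + 1 := by
    have := hpos (i + u); have := hpos (i + v); positivity
  exact sub_eq_zero.mp ((mul_eq_zero.mp key).resolve_right hpos'.ne')

def IsSL2Tiling {ι : Type*} [DecidableEq ι] (ε : ι → ι → ℤ) (a : (ι → ℤ) → ℤ) : Prop :=
  (∀ i, 0 < a i) ∧
    ∀ i k ℓ, k ≠ ℓ → squareDet a i (Pi.single k 1) (Pi.single ℓ 1) = ε k ℓ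

namespace IsSL2Tiling

variable {ι : Type*} [DecidableEq ι] {ε : ι → ι → ℤ} {a : (ι → ℤ) → ℤ}

lemma squareDet_single (ha : IsSL2Tiling ε a) (i : ι → ℤ) {k ℓ : ι} (hkℓ : k ≠ ℓ) {u v : ℤ}
    (hu : u = 1 ∨ u = -1) (hv : v = 1 ∨ v = -1) :
    squareDet a i (Pi.single k u) (Pi.single ℓ v) = u * v * ε k ℓ := by
  rcases hu with rfl | rfl <;> rcases hv with rfl | rfl <;>
    simp only [Pi.single_neg, squareDet_neg_left, squareDet_neg_right, ha.2 _ k ℓ hkℓ] <;> ring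

lemma comp_mul (ha : IsSL2Tiling ε a) {σ : ι → ℤ} (hσ : ∀ k, σ k = 1 ∨ σ k = -1)
    {ε' : ι → ι → ℤ} (hε' : ∀ k ℓ, k ≠ ℓ → ε' k ℓ = σ k * σ ℓ * ε k ℓ) :
    IsSL2Tiling ε' (fun i => a (σ * i)) := by
  refine ⟨fun i => ha.1 _, fun i k ℓ hkℓ => ?_⟩
  have hmul : ∀ k, σ * Pi.single k 1 = Pi.single k (σ k) := fun k => by
    rw [← Pi.single_mul_right, mul_one]
  change squareDet (a ∘ AddMonoidHom.mulLeft σ) _ _ _ = _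
  rw [squareDet_comp, AddMonoidHom.coe_mulLeft, hmul, hmul,
    ha.squareDet_single _ hkℓ (hσ k) (hσ ℓ), hε' k ℓ hkℓ]

lemma apply_add_single_eq (ha : IsSL2Tiling (fun _ _ => -1) a) (i : ι → ℤ) {k ℓ m : ι}
    (hkℓ : k ≠ ℓ) (hkm : k ≠ m) (hℓm : ℓ ≠ m) :
    a (i + Pi.single k 1) = a (i + Pi.single ℓ 1) :=
  apply_add_eq_of_squareDet_eq_neg_one ha.1 (fun j => ha.2 j k ℓ hkℓ) (fun j => ha.2 j k m hkm)
    (fun j => ha.2 j ℓ m hℓm) i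

lemma periodic_single_sub_single (ha : IsSL2Tiling (fun _ _ => -1) a) {k ℓ m : ι}
    (hkℓ : k ≠ ℓ) (hkm : k ≠ m) (hℓm : ℓ ≠ m) :
    Periodic a (Pi.single k 1 - Pi.single ℓ 1) := fun i => by
  have h := ha.apply_add_single_eq (i - Pi.single ℓ 1) hkℓ hkm hℓm
  rwa [sub_add_cancel, sub_add_eq_add_sub, add_sub_assoc] at h

variable [Fintype ι]

lemma periodic_of_sum_eq_zero (ha : IsSL2Tiling (fun _ _ => -1) a)
    (hι : 2 < Fintype.card ι) {v : ι → ℤ} (hv : ∑ k, v k = 0) : Periodic a v := by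
  obtain ⟨k₀⟩ : Nonempty ι := Fintype.card_pos_iff.mp (by omega)
  have hdecomp : v = ∑ k, v k • (Pi.single k 1 - Pi.single k₀ 1) := by
    rw [sum_congr rfl fun k _ => smul_sub (v k) _ _, sum_sub_distrib,
      ← sum_smul, hv, zero_smul, sub_zero]
    simp only [← Pi.single_smul, smul_eq_mul, mul_one, univ_sum_single]
  rw [hdecomp]
  refine sum_induction _ (Periodic a) (fun _ _ => Periodic.add_period)
    (periodic_with_period_zero a) fun k _ => ?_
  obtain rfl | hk := eq_or_ne k k₀
  · simpa only [sub_self, smul_zero] using periodic_with_period_zero a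
  · obtain ⟨m, hm, hmk⟩ := exists_mem_ne (s := univ.erase k₀)
      (by rw [card_erase_of_mem (mem_univ _), card_univ]; omega) k
    exact (ha.periodic_single_sub_single hk hmk.symm (ne_of_mem_erase hm).symm).zsmul _

lemma exists_eq_oddFib_sum_add (ha : IsSL2Tiling (fun _ _ => -1) a) (hι : 2 < Fintype.card ι) :
    ∃ c, ∀ i, a i = oddFib (∑ k, i k + c) := by
  obtain ⟨k, ℓ, -, hkℓ, -, -⟩ := Fintype.two_lt_card_iff.mp hι
  have hsum : ∀ i, a i = a (Pi.single k (∑ j, i j)) := fun i => by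
    have := ha.periodic_of_sum_eq_zero hι (v := Pi.single k (∑ j, i j) - i) (by simp)
    rw [← this i, add_sub_cancel]
  have hF : ∀ s, a (Pi.single k s) * a (Pi.single k (s + 2)) =
      a (Pi.single k (s + 1)) ^ 2 + 1 := fun s => by
    have h := ha.2 (Pi.single k s) k ℓ hkℓ
    rw [squareDet, hsum (_ + _), hsum (_ + _), hsum (_ + _ + _)] at h
    simp only [Pi.add_apply, sum_add_distrib, sum_pi_single', mem_univ, if_true] at h
    rw [add_assoc, one_add_one_eq_two] at h
    linear_combination -h
  obtain ⟨c, hc⟩ := exists_eq_oddFib_add (fun s => ha.1 _) hF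
  exact ⟨c, fun i => (hsum i).trans (hc _)⟩

end IsSL2Tiling

lemma isSL2Tiling_oddFib_sum {ι : Type*} [DecidableEq ι] [Fintype ι] :
    IsSL2Tiling (fun _ _ => -1) (fun i : ι → ℤ => oddFib (∑ k, i k)) := by
  refine ⟨fun _ => oddFib_pos _, fun i k ℓ _ => ?_⟩
  simp only [squareDet, Pi.add_apply, sum_add_distrib, sum_pi_single', mem_univ, if_true]
  rw [add_assoc, one_add_one_eq_two]
  linear_combination -oddFib_mul_oddFib_add_two (∑ j, i j)

section Signs

variable {ι : Type*} [DecidableEq ι] [Fintype ι] {ε : ι → ι → ℤ} {σ : ι → ℤ}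

theorem exists_isSL2Tiling_of_eq_neg_mul (hσ : ∀ k, σ k = 1 ∨ σ k = -1)
    (hε : ∀ k ℓ, k ≠ ℓ → ε k ℓ = -(σ k * σ ℓ)) : ∃ a, IsSL2Tiling ε a :=
  ⟨_, isSL2Tiling_oddFib_sum.comp_mul hσ fun k ℓ hkℓ => by rw [hε k ℓ hkℓ]; ring⟩

theorem IsSL2Tiling.exists_translate_of_eq_neg_mul (hι : 2 < Fintype.card ι)
    (hσ : ∀ k, σ k = 1 ∨ σ k = -1) (hε : ∀ k ℓ, k ≠ ℓ → ε k ℓ = -(σ k * σ ℓ))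
    {a b : (ι → ℤ) → ℤ} (ha : IsSL2Tiling ε a) (hb : IsSL2Tiling ε b) :
    ∃ t, ∀ i, b i = a (i + t) := by
  have hsq : ∀ k, σ k * σ k = 1 := fun k => by rcases hσ k with h | h <;> simp [h]
  have hinv : ∀ j, σ * (σ * j) = j := fun j => funext fun k => by
    simp only [Pi.mul_apply, ← mul_assoc, hsq, one_mul]
  have hflip : ∀ k ℓ, k ≠ ℓ → (-1 : ℤ) = σ k * σ ℓ * ε k ℓ := fun k ℓ hkℓ => by
    rw [hε k ℓ hkℓ]
    linear_combination σ ℓ * σ ℓ * hsq k + hsq ℓ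
  obtain ⟨ca, hca⟩ := (ha.comp_mul hσ hflip).exists_eq_oddFib_sum_add hι
  obtain ⟨cb, hcb⟩ := (hb.comp_mul hσ hflip).exists_eq_oddFib_sum_add hι
  obtain ⟨k₀⟩ : Nonempty ι := Fintype.card_pos_iff.mp (by omega)
  refine ⟨σ * Pi.single k₀ (cb - ca), fun i => ?_⟩
  have hshift : ∑ k, (σ * (i + σ * Pi.single k₀ (cb - ca)) : ι → ℤ) k =
      ∑ k, (σ * i) k + (cb - ca) := by
    rw [mul_add, hinv]
    simp only [Pi.add_apply, sum_add_distrib, sum_pi_single', mem_univ, if_true]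
  calc b i = b (σ * (σ * i)) := by rw [hinv]
    _ = oddFib (∑ k, (σ * i) k + cb) := hcb _
    _ = a (σ * (σ * (i + σ * Pi.single k₀ (cb - ca)))) := by
      rw [hca, hshift, add_assoc, sub_add_cancel]
    _ = a (i + σ * Pi.single k₀ (cb - ca)) := by rw [hinv]

end Signs

lemma exists_sign_of_mul_eq_neg_one {ε : Fin 3 → Fin 3 → ℤ} (hsym : ∀ k ℓ, ε k ℓ = ε ℓ k)
    (hoff : ∀ k ℓ, k ≠ ℓ → ε k ℓ = 1 ∨ ε k ℓ = -1) (hcond : ε 0 1 * ε 0 2 * ε 1 2 = -1) :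
    ∃ σ : Fin 3 → ℤ, (∀ k, σ k = 1 ∨ σ k = -1) ∧ ∀ k ℓ, k ≠ ℓ → ε k ℓ = -(σ k * σ ℓ) := by
  have h12 : ε 1 2 = -(ε 0 1 * ε 0 2) := by
    rcases hoff 0 1 (by decide) with h | h <;> rcases hoff 0 2 (by decide) with h' | h' <;>
      simp only [h, h'] at hcond ⊢ <;> linarith
  refine ⟨![1, -ε 0 1, -ε 0 2], fun k => ?_, fun k ℓ hkℓ => ?_⟩
  · fin_cases k
    · simp
    · rcases hoff 0 1 (by decide) with h | h <;> simp [h]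
    · rcases hoff 0 2 (by decide) with h | h <;> simp [h]
  · fin_cases k <;> fin_cases ℓ <;> simp_all [hsym 1 0, hsym 2 0, hsym 2 1, mul_comm]

theorem sl2_tiling_Z3_exists_unique_general (ε : Fin 3 → Fin 3 → ℤ)
    (hsym : ∀ k ℓ, ε k ℓ = ε ℓ k)
    (hoff : ∀ k ℓ, k ≠ ℓ → ε k ℓ = 1 ∨ ε k ℓ = -1)
    (hcond : ε 0 1 * ε 0 2 * ε 1 2 = -1) :
    (∃ a : (Fin 3 → ℤ) → ℤ,
      (∀ i, 0 < a i) ∧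
      (∀ (i : Fin 3 → ℤ) (k ℓ : Fin 3), k ≠ ℓ →
        a (i + Pi.single ℓ 1) * a (i + Pi.single k 1)
          - a i * a (i + Pi.single k 1 + Pi.single ℓ 1) = ε k ℓ)) ∧
    (∀ a b : (Fin 3 → ℤ) → ℤ,
      (∀ i, 0 < a i) →
      (∀ (i : Fin 3 → ℤ) (k ℓ : Fin 3), k ≠ ℓ →
        a (i + Pi.single ℓ 1) * a (i + Pi.single k 1)
          - a i * a (i + Pi.single k 1 + Pi.single ℓ 1) = ε k ℓ) →
      (∀ i, 0 < b i) →
      (∀ (i : Fin 3 → ℤ) (k ℓ : Fin 3), k ≠ ℓ →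
        b (i + Pi.single ℓ 1) * b (i + Pi.single k 1)
          - b i * b (i + Pi.single k 1 + Pi.single ℓ 1) = ε k ℓ) →
      ∃ t : Fin 3 → ℤ, ∀ i, b i = a (i + t)) := by
  obtain ⟨σ, hσ, hε⟩ := exists_sign_of_mul_eq_neg_one hsym hoff hcond
  exact ⟨exists_isSL2Tiling_of_eq_neg_mul hσ hε, fun a b ha₀ ha hb₀ hb =>
    IsSL2Tiling.exists_translate_of_eq_neg_mul (by simp) hσ hε ⟨ha₀, ha⟩ ⟨hb₀, hb⟩⟩

theorem sl2_tiling_Z3_exists_unique (ε : Fin 3 → Fin 3 → ℤ)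
    (hsym : ∀ k ℓ, ε k ℓ = ε ℓ k)
    (hoff : ∀ k ℓ, k ≠ ℓ → ε k ℓ = 1 ∨ ε k ℓ = -1)
    (hdiag : ∀ k, ε k k = -1)
    (hcond : ε 0 1 * ε 0 2 * ε 1 2 = -1) :
    (∃ a : (Fin 3 → ℤ) → ℤ,
      (∀ i, 0 < a i) ∧
      (∀ (i : Fin 3 → ℤ) (k ℓ : Fin 3), k ≠ ℓ →
        a (i + Pi.single ℓ 1) * a (i + Pi.single k 1)
          - a i * a (i + Pi.single k 1 + Pi.single ℓ 1) = ε k ℓ)) ∧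
    (∀ a b : (Fin 3 → ℤ) → ℤ,
      (∀ i, 0 < a i) →
      (∀ (i : Fin 3 → ℤ) (k ℓ : Fin 3), k ≠ ℓ →
        a (i + Pi.single ℓ 1) * a (i + Pi.single k 1)
          - a i * a (i + Pi.single k 1 + Pi.single ℓ 1) = ε k ℓ) →
      (∀ i, 0 < b i) →
      (∀ (i : Fin 3 → ℤ) (k ℓ : Fin 3), k ≠ ℓ →
        b (i + Pi.single ℓ 1) * b (i + Pi.single k 1)
          - b i * b (i + Pi.single k 1 + Pi.single ℓ 1) = ε k ℓ) →
      ∃ t : Fin 3 → ℤ, ∀ i, b i = a (i + t)) :=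
  sl2_tiling_Z3_exists_unique_general ε hsym hoff hcond
end

section
/- Fix n ≥ 3. An n×n signature matrix ε satisfies ε_{jk}·ε_{kℓ}·ε_{jℓ} = −1 for all triples of distinct indices j, k, ℓ if and only if there exists a vector δ ∈ {±1}ⁿ such that ε_{kℓ} = −δ_k·δ_ℓ for all k ≠ ℓ. -/
/-! Fix a base index `z`. Multiplying the triple relation for `z, k, ℓ` by `ε z k * ε z ℓ` and
using `ε z k ^ 2 = ε z ℓ ^ 2 = 1` gives `ε k ℓ = -(ε z k * ε z ℓ)`, so `δ k := -ε z k` for `k ≠ z`,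
`δ z := 1` works. Conversely, every triple product of `-(δ k * δ ℓ)` is `-(δ j * δ k * δ ℓ) ^ 2 = -1`. -/

variable {ι R : Type*} [CommRing R]

theorem mul_self_eq_one_of_eq_one_or_eq_neg_one {a : R} (h : a = 1 ∨ a = -1) : a * a = 1 := by
  rcases h with rfl | rfl <;> simp

theorem triple_product_eq_neg_one {δ : ι → R} (hδ : ∀ k, δ k * δ k = 1) {ε : ι → ι → R}
    (hε : ∀ k ℓ, k ≠ ℓ → ε k ℓ = -(δ k * δ ℓ)) {j k ℓ : ι}
    (hjk : j ≠ k) (hkℓ : k ≠ ℓ) (hjℓ : j ≠ ℓ) : ε j k * ε k ℓ * ε j ℓ = -1 := by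
  rw [hε j k hjk, hε k ℓ hkℓ, hε j ℓ hjℓ]
  calc -(δ j * δ k) * -(δ k * δ ℓ) * -(δ j * δ ℓ)
      = -((δ j * δ j) * (δ k * δ k) * (δ ℓ * δ ℓ)) := by ring
    _ = -1 := by simp [hδ]

theorem eq_neg_mul_of_triple_product_eq_neg_one {ε : ι → ι → R} {z k ℓ : ι}
    (hk : ε z k * ε z k = 1) (hℓ : ε z ℓ * ε z ℓ = 1) (htriple : ε z k * ε k ℓ * ε z ℓ = -1) :
    ε k ℓ = -(ε z k * ε z ℓ) := by
  linear_combination (ε z k * ε z ℓ) * htriple - ε k ℓ * (ε z ℓ * ε z ℓ) * hk - ε k ℓ * hℓ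

theorem exists_sign_vector_of_triple_product {ε : ι → ι → R} (hsym : ∀ k ℓ, ε k ℓ = ε ℓ k)
    (hoff : ∀ k ℓ, k ≠ ℓ → ε k ℓ = 1 ∨ ε k ℓ = -1)
    (htriple : ∀ j k ℓ, j ≠ k → k ≠ ℓ → j ≠ ℓ → ε j k * ε k ℓ * ε j ℓ = -1) :
    ∃ δ : ι → R, (∀ k, δ k = 1 ∨ δ k = -1) ∧ ∀ k ℓ, k ≠ ℓ → ε k ℓ = -(δ k * δ ℓ) := by
  classical
  rcases isEmpty_or_nonempty ι with _ | ⟨⟨z⟩⟩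
  · exact ⟨1, isEmptyElim, fun k => isEmptyElim k⟩
  have hsq : ∀ k, k ≠ z → ε z k * ε z k = 1 := fun k hk =>
    mul_self_eq_one_of_eq_one_or_eq_neg_one (hoff z k (Ne.symm hk))
  refine ⟨fun k => if k = z then 1 else -ε z k, fun k => ?_, fun k ℓ hkℓ => ?_⟩
  · dsimp only
    split_ifs with hk
    · exact Or.inl rfl
    · rcases hoff z k (Ne.symm hk) with h | h <;> simp [h]
  by_cases hk : k = z <;> by_cases hℓ : ℓ = z
  · exact absurd (hk.trans hℓ.symm) hkℓ
  · subst hk; simp [hℓ]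
  · subst hℓ; simp [hk, hsym k ℓ]
  · simp only [hk, hℓ, if_false, neg_mul_neg]
    exact eq_neg_mul_of_triple_product_eq_neg_one (hsq k hk) (hsq ℓ hℓ)
      (htriple z k ℓ (Ne.symm hk) hkℓ (Ne.symm hℓ))

theorem signature_triple_condition_iff_general (n : ℕ)
    (ε : Fin n → Fin n → ℤ)
    (hsym : ∀ k ℓ, ε k ℓ = ε ℓ k)
    (hoff : ∀ k ℓ, k ≠ ℓ → ε k ℓ = 1 ∨ ε k ℓ = -1) :
    (∀ j k ℓ : Fin n, j ≠ k → k ≠ ℓ → j ≠ ℓ → ε j k * ε k ℓ * ε j ℓ = -1) ↔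
    (∃ δ : Fin n → ℤ, (∀ k, δ k = 1 ∨ δ k = -1) ∧
      ∀ k ℓ, k ≠ ℓ → ε k ℓ = -(δ k * δ ℓ)) :=
  ⟨exists_sign_vector_of_triple_product hsym hoff, fun ⟨_, hδ, hε⟩ _ _ _ =>
    triple_product_eq_neg_one (fun k => mul_self_eq_one_of_eq_one_or_eq_neg_one (hδ k)) hε⟩

theorem signature_triple_condition_iff (n : ℕ) (hn : 3 ≤ n)
    (ε : Fin n → Fin n → ℤ)
    (hsym : ∀ k ℓ, ε k ℓ = ε ℓ k)
    (hoff : ∀ k ℓ, k ≠ ℓ → ε k ℓ = 1 ∨ ε k ℓ = -1)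
    (hdiag : ∀ k, ε k k = -1) :
    (∀ j k ℓ : Fin n, j ≠ k → k ≠ ℓ → j ≠ ℓ → ε j k * ε k ℓ * ε j ℓ = -1) ↔
    (∃ δ : Fin n → ℤ, (∀ k, δ k = 1 ∨ δ k = -1) ∧
      ∀ k ℓ, k ≠ ℓ → ε k ℓ = -(δ k * δ ℓ)) :=
  signature_triple_condition_iff_general n ε hsym hoff
end

section
/- Let n ≥ 3 and let ε be an n×n signature matrix admitting an ε-SL₂-tiling of ℤⁿ. Then for every triple of distinct indices j, k, ℓ one has ε_{jk}·ε_{kℓ}·ε_{jℓ} = −1. -/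
/-- There is no positive integer sequence indexed by `ℤ` with
`g m ^ 2 = g (m-1) * g (m+1) + 1` everywhere: look at a minimizer. -/
private lemma seq_contra (g : ℤ → ℤ) (hpos : ∀ m, 0 < g m)
    (hrec : ∀ m, g m * g m = g (m - 1) * g (m + 1) + 1) : False := by
  obtain ⟨m0, hm0⟩ : ∃ m0, ∀ m, g m0 ≤ g m := by
    have hne : (Set.range fun m => (g m).toNat).Nonempty := ⟨(g 0).toNat, 0, rfl⟩
    obtain ⟨m0, hm0⟩ := Nat.sInf_mem hne
    refine ⟨m0, fun m => ?_⟩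
    have h1 : (g m0).toNat ≤ (g m).toNat :=
      le_of_eq_of_le hm0 (Nat.sInf_le ⟨m, rfl⟩)
    have := hpos m0; have := hpos m
    omega
  have h1 := hm0 (m0 - 1)
  have h2 := hm0 (m0 + 1)
  have h3 : g m0 * g m0 ≤ g (m0 - 1) * g (m0 + 1) :=
    mul_le_mul h1 h2 (hpos m0).le (by linarith [hpos (m0 - 1)])
  linarith [hrec m0]

private lemma line_contra {β : Type*} [AddCommGroup β] (a : β → ℤ) (hpos : ∀ i, 0 < a i)
    (v : β) (h : ∀ i, a i * a i = a (i + v) * a (i - v) + 1) : False := by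
  refine seq_contra (fun m => a (m • v)) (fun m => hpos _) (fun m => ?_)
  have hh := h (m • v)
  rw [show m • v + v = (m + 1) • v by rw [add_smul, one_smul],
      show m • v - v = (m - 1) • v by rw [sub_smul, one_smul]] at hh
  show a (m • v) * a (m • v) = a ((m - 1) • v) * a ((m + 1) • v) + 1
  linarith [hh]

/-- The key algebraic identity on a unit cube. -/
private lemma cube {β : Type*} [AddCommGroup β] (a : β → ℤ) (ej ek el : β) (x y : ℤ)
    (h3 : ∀ i, a (i + el) * a (i + ej) - a i * a (i + ej + el) = y)
    (h5 : ∀ i, a (i + ek) * a (i + ej) - a i * a (i + ej + ek) = x) (i : β) :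
    a i * (a (i + ek) * x - a (i + el) * y)
      = a (i + ek + el) * (a (i + el) * x - a (i + ek) * y) := by
  have h3i := h3 i
  have h4 := h3 (i + ek)
  have h5i := h5 i
  have h6 := h5 (i + el)
  rw [show i + ek + ej = i + ej + ek by abel] at h4
  rw [show i + el + ek = i + ek + el by abel, show i + el + ej = i + ej + el by abel,
      show i + ej + el + ek = i + ej + ek + el by abel] at h6
  linear_combination (-(a i * a (i + ek))) * h6 + a i * a (i + el) * h4
    - a (i + ek + el) * a (i + ek) * h3i + a (i + ek + el) * a (i + el) * h5i

theorem tiling_signature_triple_condition (n : ℕ) (hn : 3 ≤ n)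
    (ε : Fin n → Fin n → ℤ)
    (hsym : ∀ k ℓ, ε k ℓ = ε ℓ k)
    (hoff : ∀ k ℓ, k ≠ ℓ → ε k ℓ = 1 ∨ ε k ℓ = -1)
    (hdiag : ∀ k, ε k k = -1)
    (hexists : ∃ a : (Fin n → ℤ) → ℤ,
      (∀ i, 0 < a i) ∧
      (∀ (i : Fin n → ℤ) (k ℓ : Fin n), k ≠ ℓ →
        a (i + Pi.single ℓ 1) * a (i + Pi.single k 1)
          - a i * a (i + Pi.single k 1 + Pi.single ℓ 1) = ε k ℓ)) :
    ∀ j k ℓ : Fin n, j ≠ k → k ≠ ℓ → j ≠ ℓ → ε j k * ε k ℓ * ε j ℓ = -1 := by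
  intro j k ℓ hjk hkl hjl
  obtain ⟨a, hpos, hrel⟩ := hexists
  have key1 := cube a (Pi.single j 1 : Fin n → ℤ) (Pi.single k 1 : Fin n → ℤ) (Pi.single ℓ 1 : Fin n → ℤ) (ε j k) (ε j ℓ)
    (fun i => hrel i j ℓ hjl) (fun i => hrel i j k hjk)
  have key2 := cube a (Pi.single k 1 : Fin n → ℤ) (Pi.single j 1 : Fin n → ℤ) (Pi.single ℓ 1 : Fin n → ℤ) (ε k j) (ε k ℓ)
    (fun i => hrel i k ℓ hkl) (fun i => hrel i k j hjk.symm)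
  -- If `a` is invariant under translation by `e_u + e_ℓ` and `ε u ℓ = -1`, contradiction.
  have finishAD : ∀ u : Fin n, u ≠ ℓ → ε u ℓ = -1 →
      (∀ i : Fin n → ℤ, a i = a (i + Pi.single u 1 + Pi.single ℓ 1)) → False := by
    intro u hul hεul hAD
    refine line_contra a hpos (Pi.single ℓ 1) (fun i => ?_)
    have h := hrel i u ℓ hul
    rw [hεul, ← hAD i] at h
    have e2 : a (i - Pi.single ℓ 1) = a (i + Pi.single u 1) := by
      have h2 := hAD (i - Pi.single ℓ 1)
      rwa [show i - Pi.single ℓ 1 + Pi.single u 1 + Pi.single ℓ 1 = i + Pi.single u 1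
        by abel] at h2
    rw [e2]; linarith
  rcases hoff j k hjk with hx | hx <;> rcases hoff j ℓ hjl with hy | hy <;>
    rcases hoff k ℓ hkl with hz | hz
  -- case (1,1,1)
  · exfalso
    have hBC : ∀ i : Fin n → ℤ, a (i + Pi.single k 1) = a (i + Pi.single ℓ 1) := by
      intro i
      have h := key1 i
      rw [hx, hy] at h
      have hp : (0 : ℤ) < a i + a (i + Pi.single k 1 + Pi.single ℓ 1) := by
        linarith [hpos i, hpos (i + Pi.single k 1 + Pi.single ℓ 1)]
      refine mul_right_cancel₀ hp.ne' ?_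
      linear_combination h
    have hBE : ∀ i : Fin n → ℤ, a (i + Pi.single j 1) = a (i + Pi.single ℓ 1) := by
      intro i
      have h := key2 i
      rw [hsym k j, hx, hz] at h
      have hp : (0 : ℤ) < a i + a (i + Pi.single j 1 + Pi.single ℓ 1) := by
        linarith [hpos i, hpos (i + Pi.single j 1 + Pi.single ℓ 1)]
      refine mul_right_cancel₀ hp.ne' ?_
      linear_combination h
    refine line_contra a hpos (Pi.single ℓ 1) (fun i => ?_)
    have h := hrel (i - Pi.single ℓ 1) j k hjk
    rw [hx] at h
    have r1 : a (i - Pi.single ℓ 1 + Pi.single k 1) = a i := by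
      have := hBC (i - Pi.single ℓ 1)
      rwa [show i - Pi.single ℓ 1 + Pi.single ℓ 1 = i by abel] at this
    have r2 : a (i - Pi.single ℓ 1 + Pi.single j 1) = a i := by
      have := hBE (i - Pi.single ℓ 1)
      rwa [show i - Pi.single ℓ 1 + Pi.single ℓ 1 = i by abel] at this
    have r3 : a (i - Pi.single ℓ 1 + Pi.single j 1 + Pi.single k 1) = a (i + Pi.single ℓ 1) := by
      have e1 := hBC (i - Pi.single ℓ 1 + Pi.single j 1)
      have e2 := hBE i
      rw [show i - Pi.single ℓ 1 + Pi.single j 1 + Pi.single ℓ 1 = i + Pi.single j 1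
        by abel] at e1
      rw [e1, e2]
    rw [r1, r2, r3] at h
    linarith
  -- case (1,1,-1) : product is -1
  · rw [hx, hy, hz]; norm_num
  -- case (1,-1,1) : product is -1
  · rw [hx, hy, hz]; norm_num
  -- case (1,-1,-1)
  · exfalso
    refine finishAD k hkl hz (fun i => ?_)
    have h := key1 i
    rw [hx, hy] at h
    have hp : (0 : ℤ) < a (i + Pi.single k 1) + a (i + Pi.single ℓ 1) := by
      linarith [hpos (i + Pi.single k 1), hpos (i + Pi.single ℓ 1)]
    refine mul_right_cancel₀ hp.ne' ?_
    linear_combination h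
  -- case (-1,1,1) : product is -1
  · rw [hx, hy, hz]; norm_num
  -- case (-1,1,-1)
  · exfalso
    refine finishAD k hkl hz (fun i => ?_)
    have h := key1 i
    rw [hx, hy] at h
    have hp : (0 : ℤ) < a (i + Pi.single k 1) + a (i + Pi.single ℓ 1) := by
      linarith [hpos (i + Pi.single k 1), hpos (i + Pi.single ℓ 1)]
    refine mul_right_cancel₀ hp.ne' ?_
    linear_combination -h
  -- case (-1,-1,1)
  · exfalso
    refine finishAD j hjl hy (fun i => ?_)
    have h := key2 i
    rw [hsym k j, hx, hz] at h
    have hp : (0 : ℤ) < a (i + Pi.single j 1) + a (i + Pi.single ℓ 1) := by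
      linarith [hpos (i + Pi.single j 1), hpos (i + Pi.single ℓ 1)]
    refine mul_right_cancel₀ hp.ne' ?_
    linear_combination -h
  -- case (-1,-1,-1) : product is -1
  · rw [hx, hy, hz]; norm_num
end

section
/- Fix n ≥ 3. There are exactly 2^{n−1} signature matrices ε for which an ε-SL₂-tiling of ℤⁿ exists, namely the matrices of the form ε_{kℓ} = −δ_k·δ_ℓ (k ≠ ℓ) for some δ ∈ {±1}ⁿ, and whenever such a tiling exists it is unique up to translation. -/
/-!
For three distinct directions `k, ℓ, m`, the tiling relations on the unit cube they span combine
into `cube_identity`; positivity then makes `a` periodic under `e_k - e_ℓ` if `ε k m = ε ℓ m`, and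
under `e_k + e_ℓ` if `ε k m = -ε ℓ m`. Along the axis `ℤ e_k` the tiling becomes a sequence with
`w r ^ 2 - w (r - 1) * w (r + 1) = ±ε k ℓ`, and no positive integer sequence has this expression
constantly equal to `1` (look at a minimum of `w`). Hence `ε k ℓ = -ε k m * ε ℓ m` on every
triangle, i.e. `ε = -δ δᵀ` off the diagonal.

For such `ε` the periods span the kernel of `i ↦ δ ⬝ᵥ i`, so a tiling is `i ↦ w (δ ⬝ᵥ i)` with
`w (r - 1) * w (r + 1) = w r ^ 2 + 1`. A positive solution takes the value `1` at two consecutive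
places (again at a minimum) and is determined by them, which gives uniqueness up to translation;
Catalan's identity shows that `w r = F (2 r + 1)` is a solution, which gives existence.
-/

open Matrix

lemma exists_forall_le_of_pos {α : Type*} [Nonempty α] {w : α → ℤ} (hpos : ∀ r, 0 < w r) :
    ∃ r₀, ∀ r, w r₀ ≤ w r := by
  obtain ⟨_, ⟨r₀, rfl⟩, hmin⟩ := Int.exists_least_of_bdd (P := (· ∈ Set.range w))
    ⟨0, by rintro _ ⟨r, rfl⟩; exact (hpos r).le⟩ ⟨_, Classical.arbitrary α, rfl⟩
  exact ⟨r₀, fun r => hmin _ ⟨r, rfl⟩⟩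

section Sequence

variable {w v : ℤ → ℤ}

lemma not_forall_sq_sub_mul_eq_one (hpos : ∀ r, 0 < w r) :
    ¬ ∀ r, w r ^ 2 - w (r - 1) * w (r + 1) = 1 := by
  intro h
  obtain ⟨r₀, hmin⟩ := exists_forall_le_of_pos hpos
  nlinarith [h r₀, hmin (r₀ - 1), hmin (r₀ + 1), hpos r₀, hpos (r₀ + 1)]

lemma exists_eq_one_and_eq_one (hpos : ∀ r, 0 < w r)
    (hw : ∀ r, w (r - 1) * w (r + 1) = w r ^ 2 + 1) : ∃ r, w r = 1 ∧ w (r + 1) = 1 := by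
  obtain ⟨r₀, hmin⟩ := exists_forall_le_of_pos hpos
  have hr₀ := hw r₀
  have hone (y : ℤ) (hy : w r₀ * y = w r₀ ^ 2 + 1) : w r₀ = 1 :=
    Int.eq_one_of_mul_eq_one_right (b := y - w r₀) (hpos r₀).le (by linear_combination hy)
  rcases (hmin (r₀ - 1)).eq_or_lt with hp | hp
  · rw [← hp] at hr₀
    exact ⟨r₀ - 1, by rw [← hp, hone _ hr₀], by rw [sub_add_cancel, hone _ hr₀]⟩
  rcases (hmin (r₀ + 1)).eq_or_lt with hq | hq
  · rw [← hq, mul_comm] at hr₀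
    exact ⟨r₀, hone _ hr₀, by rw [← hq, hone _ hr₀]⟩
  nlinarith [hpos r₀]

lemma ne_zero_of_mul_eq_sq_add_one (hw : ∀ r, w (r - 1) * w (r + 1) = w r ^ 2 + 1) (r : ℤ) :
    w r ≠ 0 := by
  intro h0
  have := hw (r + 1)
  rw [add_sub_cancel_right, h0, zero_mul] at this
  nlinarith

lemma eq_of_eq_of_eq_add_one (hw : ∀ r, w (r - 1) * w (r + 1) = w r ^ 2 + 1)
    (hv : ∀ r, v (r - 1) * v (r + 1) = v r ^ 2 + 1) {r₀ : ℤ}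
    (h₀ : w r₀ = v r₀) (h₁ : w (r₀ + 1) = v (r₀ + 1)) : w = v := by
  have up (k : ℤ) (_ : r₀ ≤ k) (hk : w k = v k ∧ w (k + 1) = v (k + 1)) :
      w (k + 1) = v (k + 1) ∧ w (k + 1 + 1) = v (k + 1 + 1) := by
    refine ⟨hk.2, mul_left_cancel₀ (ne_zero_of_mul_eq_sq_add_one hw k) ?_⟩
    have hwk := hw (k + 1)
    have hvk := hv (k + 1)
    rw [add_sub_cancel_right] at hwk hvk
    rw [hwk, hk.2, ← hvk, hk.1]
  have down (k : ℤ) (_ : k ≤ r₀) (hk : w k = v k ∧ w (k + 1) = v (k + 1)) :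
      w (k - 1) = v (k - 1) ∧ w (k - 1 + 1) = v (k - 1 + 1) := by
    rw [sub_add_cancel]
    refine ⟨mul_right_cancel₀ (ne_zero_of_mul_eq_sq_add_one hw (k + 1)) ?_, hk.1⟩
    rw [hw k, hk.2, hv k, hk.1]
  funext r
  exact (Int.inductionOn' (motive := fun k => w k = v k ∧ w (k + 1) = v (k + 1))
    r r₀ ⟨h₀, h₁⟩ up down).1

lemma exists_eq_add_of_mul_eq_sq_add_one (hwpos : ∀ r, 0 < w r)
    (hw : ∀ r, w (r - 1) * w (r + 1) = w r ^ 2 + 1) (hvpos : ∀ r, 0 < v r)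
    (hv : ∀ r, v (r - 1) * v (r + 1) = v r ^ 2 + 1) : ∃ c, ∀ r, v r = w (r + c) := by
  obtain ⟨p, hw₀, hw₁⟩ := exists_eq_one_and_eq_one hwpos hw
  obtain ⟨q, hv₀, hv₁⟩ := exists_eq_one_and_eq_one hvpos hv
  refine ⟨p - q, congrFun (eq_of_eq_of_eq_add_one hv (r₀ := q) (fun r => ?_) ?_ ?_)⟩
  · simpa only [sub_add_eq_add_sub, add_right_comm r] using hw (r + (p - q))
  · simpa [hv₀] using hw₀.symm
  · rw [hv₁, add_right_comm, add_sub_cancel, hw₁]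

end Sequence

theorem Int.fib_two_mul_add_one_sq_add_one (r : ℤ) :
    Int.fib (2 * r + 1) ^ 2 + 1 = Int.fib (2 * (r - 1) + 1) * Int.fib (2 * (r + 1) + 1) := by
  have h := Int.fib_add_sq_sub_fib_mul_fib_add_two_mul (2 * r - 1) 2
  have hodd : Odd (2 * r - 1).natAbs := Int.natAbs_odd.mpr ⟨r - 1, by ring⟩
  rw [hodd.neg_one_pow, Int.fib_two] at h
  rw [show 2 * (r - 1) + 1 = 2 * r - 1 by ring, show 2 * (r + 1) + 1 = 2 * r - 1 + 2 * 2 by ring,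
    show 2 * r + 1 = 2 * r - 1 + 2 by ring]
  linarith

def periodSubgroup {G β : Type*} [AddGroup G] (a : G → β) : AddSubgroup G where
  carrier := {c | Function.Periodic a c}
  zero_mem' x := by rw [add_zero]
  add_mem' := Function.Periodic.add_period
  neg_mem' := Function.Periodic.neg

def IsSignatureMatrix {ι : Type*} (ε : ι → ι → ℤ) : Prop :=
  (∀ k ℓ, ε k ℓ = ε ℓ k) ∧ (∀ k ℓ, k ≠ ℓ → ε k ℓ = 1 ∨ ε k ℓ = -1) ∧ ∀ k, ε k k = -1

theorem isSignatureMatrix_neg_mul {ι : Type*} {δ : ι → ℤ} (hδ : ∀ k, δ k = 1 ∨ δ k = -1) :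
    IsSignatureMatrix fun k ℓ => -(δ k * δ ℓ) := by
  refine ⟨fun k ℓ => by ring, fun k ℓ _ => ?_, fun k => ?_⟩
  · rcases hδ k with h₁ | h₁ <;> rcases hδ ℓ with h₂ | h₂ <;> simp [h₁, h₂]
  · exact congrArg Neg.neg (mul_self_eq_one_iff.mpr (hδ k))

section Tiling

variable {ι : Type*} [DecidableEq ι]

structure IsSL2Tiling_s16 (ε : ι → ι → ℤ) (a : (ι → ℤ) → ℤ) : Prop where
  pos : ∀ i, 0 < a i
  rel : ∀ (i : ι → ℤ) (k ℓ : ι), k ≠ ℓ →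
    a (i + Pi.single ℓ 1) * a (i + Pi.single k 1) - a i * a (i + Pi.single k 1 + Pi.single ℓ 1)
      = ε k ℓ

theorem isSL2Tiling_iff {ε : ι → ι → ℤ} {a : (ι → ℤ) → ℤ} :
    IsSL2Tiling_s16 ε a ↔ (∀ i, 0 < a i) ∧ ∀ (i : ι → ℤ) (k ℓ : ι), k ≠ ℓ →
      a (i + Pi.single ℓ 1) * a (i + Pi.single k 1) - a i * a (i + Pi.single k 1 + Pi.single ℓ 1)
        = ε k ℓ :=
  ⟨fun h => ⟨h.pos, h.rel⟩, fun h => ⟨h.1, h.2⟩⟩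

namespace IsSL2Tiling_s16

variable {ε : ι → ι → ℤ} {a : (ι → ℤ) → ℤ} {k ℓ m : ι}

theorem cube_identity (h : IsSL2Tiling_s16 ε a) (hkm : k ≠ m) (hlm : ℓ ≠ m) (i : ι → ℤ) :
    a (i + Pi.single k 1 + Pi.single ℓ 1) *
        (a (i + Pi.single k 1) * ε ℓ m - a (i + Pi.single ℓ 1) * ε k m)
      = a i * (a (i + Pi.single ℓ 1) * ε ℓ m - a (i + Pi.single k 1) * ε k m) := by
  have face_km := h.rel i k m hkm
  have face_ℓm := h.rel i ℓ m hlm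
  have face_ℓm' := h.rel (i + Pi.single k 1) ℓ m hlm
  have face_km' := h.rel (i + Pi.single ℓ 1) k m hkm
  rw [add_right_comm i (Pi.single ℓ 1) (Pi.single k 1)] at face_km'
  refine mul_left_cancel₀ (h.pos i).ne' ?_
  linear_combination (a i * a i * a (i + Pi.single ℓ 1)) * face_ℓm'
    - (a i * a i * a (i + Pi.single k 1)) * face_km'
    + (a i * a (i + Pi.single ℓ 1) * a (i + Pi.single k 1 + Pi.single ℓ 1)) * face_km
    - (a i * a (i + Pi.single k 1) * a (i + Pi.single k 1 + Pi.single ℓ 1)) * face_ℓm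

theorem periodic_single_sub_single_s16 (h : IsSL2Tiling_s16 ε a) (hkm : k ≠ m) (hlm : ℓ ≠ m)
    (hε : ε k m = ε ℓ m) (hm : ε k m ≠ 0) :
    Function.Periodic a (Pi.single k 1 - Pi.single ℓ 1) := by
  have key (i : ι → ℤ) : a (i + Pi.single k 1) = a (i + Pi.single ℓ 1) := by
    have hcube := h.cube_identity hkm hlm i
    rw [← hε] at hcube
    have hzero : (a (i + Pi.single k 1) - a (i + Pi.single ℓ 1)) *
        (ε k m * (a (i + Pi.single k 1 + Pi.single ℓ 1) + a i)) = 0 := by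
      linear_combination hcube
    have hpos := add_pos (h.pos (i + Pi.single k 1 + Pi.single ℓ 1)) (h.pos i)
    exact sub_eq_zero.mp ((mul_eq_zero.mp hzero).resolve_right (mul_ne_zero hm hpos.ne'))
  intro j
  convert key (j - Pi.single ℓ 1) using 2 <;> abel

theorem periodic_single_add_single (h : IsSL2Tiling_s16 ε a) (hkm : k ≠ m) (hlm : ℓ ≠ m)
    (hε : ε k m = -ε ℓ m) (hm : ε ℓ m ≠ 0) :
    Function.Periodic a (Pi.single k 1 + Pi.single ℓ 1) := by
  intro i
  have hcube := h.cube_identity hkm hlm i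
  rw [hε] at hcube
  have hzero : (a (i + Pi.single k 1 + Pi.single ℓ 1) - a i) *
      (ε ℓ m * (a (i + Pi.single k 1) + a (i + Pi.single ℓ 1))) = 0 := by
    linear_combination hcube
  have hpos := add_pos (h.pos (i + Pi.single k 1)) (h.pos (i + Pi.single ℓ 1))
  rw [← add_assoc]
  exact sub_eq_zero.mp ((mul_eq_zero.mp hzero).resolve_right (mul_ne_zero hm hpos.ne'))

theorem sq_sub_mul_eq_of_periodic_sub (h : IsSL2Tiling_s16 ε a) (hkl : k ≠ ℓ)
    (hp : Function.Periodic a (Pi.single k 1 - Pi.single ℓ 1)) (r : ℤ) :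
    a (Pi.single k r) ^ 2 - a (Pi.single k (r - 1)) * a (Pi.single k (r + 1)) = ε k ℓ := by
  have hℓ (x : ι → ℤ) : a (x + Pi.single ℓ 1) = a (x + Pi.single k 1) := by
    rw [← hp, add_add_sub_cancel]
  have hrel := h.rel (Pi.single k (r - 1)) k ℓ hkl
  rw [hℓ, hℓ, ← Pi.single_add, sub_add_cancel, ← Pi.single_add] at hrel
  linear_combination hrel

theorem mul_sub_sq_eq_of_periodic_add (h : IsSL2Tiling_s16 ε a) (hkl : k ≠ ℓ)
    (hp : Function.Periodic a (Pi.single k 1 + Pi.single ℓ 1)) (r : ℤ) :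
    a (Pi.single k (r - 1)) * a (Pi.single k (r + 1)) - a (Pi.single k r) ^ 2 = ε k ℓ := by
  have hℓ (x : ι → ℤ) : a (x + Pi.single ℓ 1) = a (x - Pi.single k 1) := by
    rw [← hp (x - Pi.single k 1)]
    congr 1
    abel
  have hrel := h.rel (Pi.single k r) k ℓ hkl
  rw [add_assoc, hp, hℓ, ← Pi.single_sub, ← Pi.single_add] at hrel
  linear_combination hrel

theorem triangle (h : IsSL2Tiling_s16 ε a) (hsign : ∀ k ℓ, k ≠ ℓ → ε k ℓ = 1 ∨ ε k ℓ = -1)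
    (hkl : k ≠ ℓ) (hkm : k ≠ m) (hlm : ℓ ≠ m) : ε k ℓ = -(ε k m * ε ℓ m) := by
  have hline := not_forall_sq_sub_mul_eq_one (w := fun r => a (Pi.single k r)) fun _ => h.pos _
  have hsq : ε ℓ m * ε ℓ m = 1 := mul_self_eq_one_iff.mpr (hsign ℓ m hlm)
  have hne : ε ℓ m ≠ 0 := left_ne_zero_of_mul_eq_one hsq
  obtain hε | hε : ε k m = ε ℓ m ∨ ε k m = -ε ℓ m := by
    rcases hsign k m hkm with h₁ | h₁ <;> rcases hsign ℓ m hlm with h₂ | h₂ <;> simp [h₁, h₂]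
  · have hp := h.periodic_single_sub_single_s16 hkm hlm hε (hε ▸ hne)
    rcases hsign k ℓ hkl with h₁ | h₁
    · exact (hline fun r => (h.sq_sub_mul_eq_of_periodic_sub hkl hp r).trans h₁).elim
    · rw [h₁, hε, hsq]
  · have hp := h.periodic_single_add_single hkm hlm hε hne
    rcases hsign k ℓ hkl with h₁ | h₁
    · rw [h₁, hε, neg_mul, hsq, neg_neg]
    · refine (hline fun r => ?_).elim
      linear_combination -(h.mul_sub_sq_eq_of_periodic_add hkl hp r) - h₁

theorem symm (h : IsSL2Tiling_s16 ε a) (k ℓ : ι) : ε k ℓ = ε ℓ k := by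
  rcases eq_or_ne k ℓ with rfl | hkl
  · rfl
  rw [← h.rel 0 k ℓ hkl, ← h.rel 0 ℓ k hkl.symm, add_right_comm, mul_comm]

theorem exists_sign_vector (h : IsSL2Tiling_s16 ε a)
    (hsign : ∀ k ℓ, k ≠ ℓ → ε k ℓ = 1 ∨ ε k ℓ = -1) (k₀ : ι) :
    ∃ δ : ι → ℤ, (∀ k, δ k = 1 ∨ δ k = -1) ∧ δ k₀ = 1 ∧
      ∀ k ℓ, k ≠ ℓ → ε k ℓ = -(δ k * δ ℓ) := by
  refine ⟨fun k => if k = k₀ then 1 else -ε k k₀, fun k => ?_, if_pos rfl, fun k ℓ hkl => ?_⟩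
  · dsimp only
    split_ifs with hk
    · exact Or.inl rfl
    · rcases hsign k k₀ hk with h₁ | h₁ <;> simp [h₁]
  · by_cases hk : k = k₀ <;> by_cases hℓ : ℓ = k₀ <;> simp only [hk, hℓ, if_true, if_false]
    · exact absurd (hk.trans hℓ.symm) hkl
    · subst hk; rw [h.symm]; ring
    · subst hℓ; ring
    · rw [h.triangle hsign hkl hk hℓ]; ring

variable {δ : ι → ℤ}

theorem periodic_single_sub_single_mul (h : IsSL2Tiling_s16 ε a)
    (hδ : ∀ k, δ k = 1 ∨ δ k = -1) (hε : ∀ k ℓ, k ≠ ℓ → ε k ℓ = -(δ k * δ ℓ))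
    (hthree : 3 ≤ ENat.card ι) (k ℓ : ι) :
    Function.Periodic a (Pi.single k 1 - Pi.single ℓ (δ k * δ ℓ)) := by
  have hsq (k : ι) : δ k * δ k = 1 := mul_self_eq_one_iff.mpr (hδ k)
  rcases eq_or_ne k ℓ with rfl | hkl
  · rw [hsq, sub_self]
    exact fun x => congrArg a (add_zero x)
  obtain ⟨m, hmk, hmℓ⟩ := ENat.exists_ne_ne_of_three_le hthree k ℓ
  have hm : ε ℓ m ≠ 0 := by
    rw [hε ℓ m hmℓ.symm, neg_ne_zero]
    exact mul_ne_zero (left_ne_zero_of_mul_eq_one (hsq ℓ)) (left_ne_zero_of_mul_eq_one (hsq m))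
  obtain hkℓ | hkℓ : δ k = δ ℓ ∨ δ k = -δ ℓ := by
    rcases hδ k with h₁ | h₁ <;> rcases hδ ℓ with h₂ | h₂ <;> simp [h₁, h₂]
  · have hεm : ε k m = ε ℓ m := by rw [hε k m hmk.symm, hε ℓ m hmℓ.symm, hkℓ]
    rw [hkℓ, hsq]
    exact h.periodic_single_sub_single_s16 hmk.symm hmℓ.symm hεm (hεm ▸ hm)
  · have hεm : ε k m = -ε ℓ m := by rw [hε k m hmk.symm, hε ℓ m hmℓ.symm, hkℓ, neg_mul]
    rw [hkℓ, neg_mul, hsq, Pi.single_neg, sub_neg_eq_add]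
    exact h.periodic_single_add_single hmk.symm hmℓ.symm hεm hm

theorem single_mul_single_eq_sq_add_one (h : IsSL2Tiling_s16 ε a)
    (hδ : ∀ k, δ k = 1 ∨ δ k = -1) (hε : ∀ k ℓ, k ≠ ℓ → ε k ℓ = -(δ k * δ ℓ))
    (hthree : 3 ≤ ENat.card ι) {k₀ : ι} (hk₀ : δ k₀ = 1) (r : ℤ) :
    a (Pi.single k₀ (r - 1)) * a (Pi.single k₀ (r + 1)) = a (Pi.single k₀ r) ^ 2 + 1 := by
  obtain ⟨ℓ, hℓk₀, -⟩ := ENat.exists_ne_ne_of_three_le hthree k₀ k₀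
  have hp := h.periodic_single_sub_single_mul hδ hε hthree k₀ ℓ
  have hεℓ := hε k₀ ℓ hℓk₀.symm
  rw [hk₀, one_mul] at hp hεℓ
  rcases hδ ℓ with hℓ | hℓ <;> rw [hℓ] at hp hεℓ
  · linear_combination -h.sq_sub_mul_eq_of_periodic_sub hℓk₀.symm hp r - hεℓ
  · rw [Pi.single_neg, sub_neg_eq_add] at hp
    linear_combination h.mul_sub_sq_eq_of_periodic_add hℓk₀.symm hp r + hεℓ

variable [Fintype ι]

theorem eq_single_dotProduct (h : IsSL2Tiling_s16 ε a)
    (hδ : ∀ k, δ k = 1 ∨ δ k = -1) (hε : ∀ k ℓ, k ≠ ℓ → ε k ℓ = -(δ k * δ ℓ))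
    (hthree : 3 ≤ ENat.card ι) {k₀ : ι} (hk₀ : δ k₀ = 1) (i : ι → ℤ) :
    a i = a (Pi.single k₀ (δ ⬝ᵥ i)) := by
  have hdecomp : i - Pi.single k₀ (δ ⬝ᵥ i) =
      ∑ t, i t • (Pi.single t 1 - Pi.single k₀ (δ t * δ k₀)) := by
    ext j
    by_cases hj : j = k₀ <;>
      simp [Finset.sum_apply, Pi.single_apply, dotProduct, hk₀, hj, mul_sub, mul_comm]
  have hmem : i - Pi.single k₀ (δ ⬝ᵥ i) ∈ periodSubgroup a := by
    rw [hdecomp]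
    exact sum_mem fun t _ => zsmul_mem (h.periodic_single_sub_single_mul hδ hε hthree t k₀) _
  have := hmem (Pi.single k₀ (δ ⬝ᵥ i))
  rw [← this, add_sub_cancel]

theorem exists_translate (ha : IsSL2Tiling_s16 ε a) {b : (ι → ℤ) → ℤ} (hb : IsSL2Tiling_s16 ε b)
    (hsign : ∀ k ℓ, k ≠ ℓ → ε k ℓ = 1 ∨ ε k ℓ = -1) (hthree : 3 ≤ ENat.card ι) :
    ∃ t, ∀ i, b i = a (i + t) := by
  obtain ⟨k₀⟩ := (ENat.one_le_card_iff_nonempty ι).mp (le_trans (by norm_num) hthree)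
  obtain ⟨δ, hδ, hk₀, hε⟩ := ha.exists_sign_vector hsign k₀
  obtain ⟨c, hc⟩ := exists_eq_add_of_mul_eq_sq_add_one (fun _ => ha.pos _)
    (ha.single_mul_single_eq_sq_add_one hδ hε hthree hk₀) (fun _ => hb.pos _)
    (hb.single_mul_single_eq_sq_add_one hδ hε hthree hk₀)
  refine ⟨Pi.single k₀ c, fun i => ?_⟩
  rw [hb.eq_single_dotProduct hδ hε hthree hk₀, hc,
    ha.eq_single_dotProduct hδ hε hthree hk₀ (i + _), dotProduct_add, dotProduct_single, hk₀,
    one_mul]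

end IsSL2Tiling_s16

theorem isSL2Tiling_comp_dotProduct [Fintype ι] {ε : ι → ι → ℤ} {δ : ι → ℤ} {w : ℤ → ℤ}
    (hpos : ∀ r, 0 < w r) (hw : ∀ r, w (r - 1) * w (r + 1) = w r ^ 2 + 1)
    (hδ : ∀ k, δ k = 1 ∨ δ k = -1) (hε : ∀ k ℓ, k ≠ ℓ → ε k ℓ = -(δ k * δ ℓ)) :
    IsSL2Tiling_s16 ε (fun i => w (δ ⬝ᵥ i)) := by
  refine ⟨fun i => hpos _, fun i k ℓ hkl => ?_⟩
  simp only [dotProduct_add, dotProduct_single, mul_one, hε k ℓ hkl]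
  set m := δ ⬝ᵥ i
  rcases hδ k with hk | hk <;> rcases hδ ℓ with hℓ | hℓ <;> rw [hk, hℓ]
  · have := hw (m + 1); ring_nf at this ⊢; linarith
  · have := hw m; ring_nf at this ⊢; linarith
  · have := hw m; ring_nf at this ⊢; linarith
  · have := hw (m - 1); ring_nf at this ⊢; linarith

theorem exists_isSL2Tiling_of_sign [Fintype ι] {ε : ι → ι → ℤ} {δ : ι → ℤ}
    (hδ : ∀ k, δ k = 1 ∨ δ k = -1) (hε : ∀ k ℓ, k ≠ ℓ → ε k ℓ = -(δ k * δ ℓ)) :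
    ∃ a, IsSL2Tiling_s16 ε a :=
  ⟨_, isSL2Tiling_comp_dotProduct (w := fun r => Int.fib (2 * r + 1))
    (fun _ => Int.fib_two_mul_add_one_pos) (fun r => (Int.fib_two_mul_add_one_sq_add_one r).symm)
    hδ hε⟩

theorem exists_isSL2Tiling_iff [Fintype ι] [Nonempty ι] {ε : ι → ι → ℤ}
    (hsign : ∀ k ℓ, k ≠ ℓ → ε k ℓ = 1 ∨ ε k ℓ = -1) :
    (∃ a, IsSL2Tiling_s16 ε a) ↔
      ∃ δ : ι → ℤ, (∀ k, δ k = 1 ∨ δ k = -1) ∧ ∀ k ℓ, k ≠ ℓ → ε k ℓ = -(δ k * δ ℓ) := by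
  constructor
  · rintro ⟨a, ha⟩
    obtain ⟨δ, hδ, -, hε⟩ := ha.exists_sign_vector hsign (Classical.arbitrary ι)
    exact ⟨δ, hδ, hε⟩
  · rintro ⟨δ, hδ, hε⟩
    exact exists_isSL2Tiling_of_sign hδ hε

theorem ncard_setOf_sign_vector [Fintype ι] (k₀ : ι) :
    {δ : ι → ℤ | (∀ k, δ k = 1 ∨ δ k = -1) ∧ δ k₀ = 1}.ncard = 2 ^ (Fintype.card ι - 1) := by
  have hpi : {δ : ι → ℤ | (∀ k, δ k = 1 ∨ δ k = -1) ∧ δ k₀ = 1} =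
      Fintype.piFinset fun k => if k = k₀ then {1} else {1, -1} := by
    ext δ
    simp only [Set.mem_ofPred_eq, Fintype.coe_piFinset, Set.mem_pi, Set.mem_univ, true_implies]
    constructor
    · rintro ⟨hδ, hk₀⟩ k
      split_ifs with hk
      · simp [hk, hk₀]
      · simpa using hδ k
    · intro h
      have hk₀ : δ k₀ = 1 := by simpa using h k₀
      refine ⟨fun k => ?_, hk₀⟩
      by_cases hk : k = k₀
      · exact Or.inl (hk ▸ hk₀)
      · simpa [hk] using h k
  rw [hpi, Set.ncard_coe_finset, Fintype.card_piFinset]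
  simp [apply_ite Finset.card, Finset.prod_ite, Finset.filter_ne', Finset.card_erase_of_mem]

theorem ncard_setOf_exists_isSL2Tiling [Fintype ι] [Nonempty ι] :
    {ε : ι → ι → ℤ | IsSignatureMatrix ε ∧ ∃ a, IsSL2Tiling_s16 ε a}.ncard =
      2 ^ (Fintype.card ι - 1) := by
  let k₀ := Classical.arbitrary ι
  have himage : {ε : ι → ι → ℤ | IsSignatureMatrix ε ∧ ∃ a, IsSL2Tiling_s16 ε a} =
      (fun δ k ℓ => -(δ k * δ ℓ)) '' {δ : ι → ℤ | (∀ k, δ k = 1 ∨ δ k = -1) ∧ δ k₀ = 1} := by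
    ext ε
    constructor
    · rintro ⟨⟨-, hsign, hdiag⟩, a, ha⟩
      obtain ⟨δ, hδ, hk₀, hε⟩ := ha.exists_sign_vector hsign k₀
      refine ⟨δ, ⟨hδ, hk₀⟩, funext₂ fun k ℓ => ?_⟩
      rcases eq_or_ne k ℓ with rfl | hkl
      · rw [hdiag]
        exact congrArg Neg.neg (mul_self_eq_one_iff.mpr (hδ k))
      · exact (hε k ℓ hkl).symm
    · rintro ⟨δ, ⟨hδ, -⟩, rfl⟩
      exact ⟨isSignatureMatrix_neg_mul hδ, exists_isSL2Tiling_of_sign hδ fun _ _ _ => rfl⟩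
  rw [himage, Set.InjOn.ncard_image, ncard_setOf_sign_vector]
  rintro δ ⟨-, hδ⟩ δ' ⟨-, hδ'⟩ h
  funext k
  simpa [hδ, hδ'] using congrFun (congrFun h k₀) k

end Tiling

theorem classification_of_tilings (n : ℕ) (hn : 3 ≤ n) :
    {ε : Fin n → Fin n → ℤ |
      ((∀ k ℓ, ε k ℓ = ε ℓ k) ∧
       (∀ k ℓ, k ≠ ℓ → ε k ℓ = 1 ∨ ε k ℓ = -1) ∧
       (∀ k, ε k k = -1)) ∧
      (∃ a : (Fin n → ℤ) → ℤ,
        (∀ i, 0 < a i) ∧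
        (∀ (i : Fin n → ℤ) (k ℓ : Fin n), k ≠ ℓ →
          a (i + Pi.single ℓ 1) * a (i + Pi.single k 1)
            - a i * a (i + Pi.single k 1 + Pi.single ℓ 1) = ε k ℓ))}.ncard
      = 2 ^ (n - 1) ∧
    (∀ ε : Fin n → Fin n → ℤ,
      ((∀ k ℓ, ε k ℓ = ε ℓ k) ∧
       (∀ k ℓ, k ≠ ℓ → ε k ℓ = 1 ∨ ε k ℓ = -1) ∧
       (∀ k, ε k k = -1)) →
      ((∃ a : (Fin n → ℤ) → ℤ,
        (∀ i, 0 < a i) ∧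
        (∀ (i : Fin n → ℤ) (k ℓ : Fin n), k ≠ ℓ →
          a (i + Pi.single ℓ 1) * a (i + Pi.single k 1)
            - a i * a (i + Pi.single k 1 + Pi.single ℓ 1) = ε k ℓ)) ↔
       (∃ δ : Fin n → ℤ, (∀ k, δ k = 1 ∨ δ k = -1) ∧
         ∀ k ℓ, k ≠ ℓ → ε k ℓ = -(δ k * δ ℓ)))) ∧
    (∀ ε : Fin n → Fin n → ℤ,
      ((∀ k ℓ, ε k ℓ = ε ℓ k) ∧
       (∀ k ℓ, k ≠ ℓ → ε k ℓ = 1 ∨ ε k ℓ = -1) ∧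
       (∀ k, ε k k = -1)) →
      ∀ a b : (Fin n → ℤ) → ℤ,
      (∀ i, 0 < a i) →
      (∀ (i : Fin n → ℤ) (k ℓ : Fin n), k ≠ ℓ →
        a (i + Pi.single ℓ 1) * a (i + Pi.single k 1)
          - a i * a (i + Pi.single k 1 + Pi.single ℓ 1) = ε k ℓ) →
      (∀ i, 0 < b i) →
      (∀ (i : Fin n → ℤ) (k ℓ : Fin n), k ≠ ℓ →
        b (i + Pi.single ℓ 1) * b (i + Pi.single k 1)
          - b i * b (i + Pi.single k 1 + Pi.single ℓ 1) = ε k ℓ) →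
      ∃ t : Fin n → ℤ, ∀ i, b i = a (i + t)) := by
  have : Nonempty (Fin n) := ⟨⟨0, by omega⟩⟩
  have hthree : 3 ≤ ENat.card (Fin n) := by simpa using hn
  refine ⟨?_, fun ε hε => ?_, fun ε hε a b ha hra hb hrb => ?_⟩
  · simpa [IsSignatureMatrix, isSL2Tiling_iff] using
      ncard_setOf_exists_isSL2Tiling (ι := Fin n)
  · simpa [isSL2Tiling_iff] using exists_isSL2Tiling_iff hε.2.1
  · exact IsSL2Tiling_s16.exists_translate ⟨ha, hra⟩ ⟨hb, hrb⟩ hε.2.1 hthree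
end
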